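/- arXiv:2001.02110 — 13 statements merged into one kernel-verified Lean document; each statement's English description precedes it below -/
import Mathlib

section
/- Let (S, 𝓕) be a measurable space, let Q be a probability measure on it, let α > 1, and let g : S → ℝ be bounded and measurable. Then (1/α)·log ∫ e^{α g} dQ = sup over all probability measures P на (S,𝓕) of [ (1/(α−1))·log ∫ e^{(α−1) g} dP − R_α(P‖Q) ], where the supremum is taken over all probability measures P on (S, 𝓕). -/
open MeasureTheory Classical

/-- The Rényi divergence of degree `α` of `Q` with respect to `P`:
`R_α(Q‖P) = (1/(α(α−1)))·log ∫ (dQ/dP)^α dP` if `Q ≪ P`, and `+∞` otherwise. -/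
noncomputable def renyiDiv {S : Type*} [MeasurableSpace S] (α : ℝ)
    (Q P : Measure S) : EReal :=
  if Q ≪ P then
    (((α * (α - 1))⁻¹ : ℝ) : EReal) * ENNReal.log (∫⁻ x, Q.rnDeriv P x ^ α ∂P)
  else ⊤

/-!
The inequality `≤` for a fixed `P` is Hölder's inequality with exponents `α/(α-1)` and `α`
applied to `∫ e^{(α-1)g} dP = ∫ e^{(α-1)g} (dP/dQ) dQ`, followed by taking logarithms. Equality is
attained at the exponentially tilted measure `dP = e^g dQ / ∫ e^g dQ`, for which both
`∫ e^{(α-1)g} dP` and `∫ (dP/dQ)^α dQ` are explicit ratios of `∫ e^{αg} dQ` and `∫ e^g dQ`.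
-/

open Real

section
variable {S : Type*} [MeasurableSpace S]

theorem integrable_exp_const_mul_of_abs_le {μ : Measure S} [IsFiniteMeasure μ] {g : S → ℝ}
    (hg : Measurable g) {M : ℝ} (hM : ∀ x, |g x| ≤ M) (c : ℝ) :
    Integrable (fun x ↦ exp (c * g x)) μ := by
  refine .of_bound (by fun_prop) (exp (|c| * M)) (ae_of_all _ fun x ↦ ?_)
  rw [norm_of_nonneg (exp_pos _).le, exp_le_exp]
  exact (le_abs_self _).trans (by rw [abs_mul]; gcongr; exact hM x)

theorem renyiDiv_eq_top {α : ℝ} (hα : 1 < α) {P Q : Measure S}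
    (h : ¬(P ≪ Q ∧ ∫⁻ x, P.rnDeriv Q x ^ α ∂Q ≠ ⊤)) : renyiDiv α P Q = ⊤ := by
  rw [renyiDiv]
  split_ifs with hPQ
  · have hcoef : (0 : ℝ) < (α * (α - 1))⁻¹ := by
      have : 0 < α - 1 := by linarith
      positivity
    rw [not_not.mp (not_and.mp h hPQ), ENNReal.log_top, EReal.coe_mul_top_of_pos hcoef]
  · rfl

theorem renyiDiv_eq_coe {α : ℝ} {P Q : Measure S} (hPQ : P ≪ Q)
    (h0 : ∫⁻ x, P.rnDeriv Q x ^ α ∂Q ≠ 0) (htop : ∫⁻ x, P.rnDeriv Q x ^ α ∂Q ≠ ⊤) :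
    renyiDiv α P Q = ((α * (α - 1))⁻¹ * log (∫⁻ x, P.rnDeriv Q x ^ α ∂Q).toReal : ℝ) := by
  rw [renyiDiv, if_pos hPQ, ENNReal.log_pos_real' (ENNReal.toReal_pos h0 htop), EReal.coe_mul]

theorem lintegral_le_lintegral_rpow_mul_lintegral_rnDeriv_rpow {P Q : Measure S}
    [P.HaveLebesgueDecomposition Q] (hPQ : P ≪ Q) {p q : ℝ} (hpq : p.HolderConjugate q)
    {h : S → ENNReal} (hh : AEMeasurable h Q) :
    ∫⁻ x, h x ∂P ≤ (∫⁻ x, h x ^ p ∂Q) ^ (1 / p) * (∫⁻ x, P.rnDeriv Q x ^ q ∂Q) ^ (1 / q) := by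
  calc ∫⁻ x, h x ∂P = ∫⁻ x, (h * P.rnDeriv Q) x ∂Q := by
        rw [← lintegral_rnDeriv_mul hPQ hh]
        simp only [Pi.mul_apply, mul_comm]
    _ ≤ _ := ENNReal.lintegral_mul_le_Lp_mul_Lq Q hpq hh
        (Measure.measurable_rnDeriv P Q).aemeasurable

theorem inv_mul_log_sub_le_of_le_rpow_mul_rpow {α a z i : ℝ} (hα : 1 < α) (ha : 0 < a)
    (hz : 0 < z) (hi : 0 < i) (h : a ≤ z ^ ((α - 1) / α) * i ^ (1 / α)) :
    (α - 1)⁻¹ * log a - (α * (α - 1))⁻¹ * log i ≤ α⁻¹ * log z := by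
  have hlog : log a ≤ (α - 1) / α * log z + 1 / α * log i := by
    calc log a ≤ log (z ^ ((α - 1) / α) * i ^ (1 / α)) := log_le_log ha h
      _ = _ := by rw [log_mul (by positivity) (by positivity), log_rpow hz, log_rpow hi]
  have hα1 : 0 < α - 1 := by linarith
  have key := mul_le_mul_of_nonneg_left hlog (inv_pos.2 hα1).le
  have : (α - 1)⁻¹ * ((α - 1) / α * log z + 1 / α * log i)
      = α⁻¹ * log z + (α * (α - 1))⁻¹ * log i := by
    field_simp
  linarith

theorem integral_exp_sub_one_mul_le_of_absolutelyContinuous {α : ℝ} (hα : 1 < α)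
    {P Q : Measure S} [SigmaFinite P] [SigmaFinite Q] (hPQ : P ≪ Q)
    (htop : ∫⁻ x, P.rnDeriv Q x ^ α ∂Q ≠ ⊤) {g : S → ℝ} (hg : Measurable g)
    (hP : Integrable (fun x ↦ exp ((α - 1) * g x)) P)
    (hQ : Integrable (fun x ↦ exp (α * g x)) Q) :
    ∫ x, exp ((α - 1) * g x) ∂P ≤
      (∫ x, exp (α * g x) ∂Q) ^ ((α - 1) / α) * (∫⁻ x, P.rnDeriv Q x ^ α ∂Q).toReal ^ (1 / α) := by
  have hα1 : 0 < α - 1 := by linarith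
  have hconj : (α / (α - 1)).HolderConjugate α := by
    rw [Real.holderConjugate_iff]
    exact ⟨by rw [lt_div_iff₀ hα1]; linarith, by field_simp; ring⟩
  have hpow (x : S) :
      ENNReal.ofReal (exp ((α - 1) * g x)) ^ (α / (α - 1)) = ENNReal.ofReal (exp (α * g x)) := by
    rw [ENNReal.ofReal_rpow_of_pos (exp_pos _), ← exp_mul]
    congr 2
    field_simp
  have hHolder := lintegral_le_lintegral_rpow_mul_lintegral_rnDeriv_rpow hPQ hconj
    (h := fun x ↦ ENNReal.ofReal (exp ((α - 1) * g x))) (by fun_prop)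
  simp only [hpow] at hHolder
  have hQ₀ : 0 ≤ ∫ x, exp (α * g x) ∂Q := integral_nonneg fun _ ↦ (exp_pos _).le
  rwa [← ofReal_integral_eq_lintegral_ofReal hP (ae_of_all _ fun _ ↦ (exp_pos _).le),
    ← ofReal_integral_eq_lintegral_ofReal hQ (ae_of_all _ fun _ ↦ (exp_pos _).le),
    ← ENNReal.ofReal_toReal htop, ENNReal.ofReal_rpow_of_nonneg hQ₀ (by positivity),
    ENNReal.ofReal_rpow_of_nonneg ENNReal.toReal_nonneg (by positivity),
    ← ENNReal.ofReal_mul (by positivity), ENNReal.ofReal_le_ofReal_iff (by positivity),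
    one_div_div] at hHolder

theorem coe_sub_renyiDiv_le {α : ℝ} (hα : 1 < α) {P Q : Measure S} [NeZero P] [SigmaFinite P]
    [SigmaFinite Q] {g : S → ℝ} (hg : Measurable g)
    (hP : Integrable (fun x ↦ exp ((α - 1) * g x)) P)
    (hQ : Integrable (fun x ↦ exp (α * g x)) Q) :
    (((α - 1)⁻¹ * log (∫ x, exp ((α - 1) * g x) ∂P) : ℝ) : EReal) - renyiDiv α P Q ≤
      ((α⁻¹ * log (∫ x, exp (α * g x) ∂Q) : ℝ) : EReal) := by
  by_cases hfin : P ≪ Q ∧ ∫⁻ x, P.rnDeriv Q x ^ α ∂Q ≠ ⊤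
  swap
  · simp [renyiDiv_eq_top hα hfin]
  obtain ⟨hPQ, htop⟩ := hfin
  have : NeZero Q := ⟨fun hQ0 ↦ NeZero.ne P (Measure.measure_univ_eq_zero.1 (hPQ (by simp [hQ0])))⟩
  have hHolder := integral_exp_sub_one_mul_le_of_absolutelyContinuous hα hPQ htop hg hP hQ
  have ha := integral_exp_pos hP
  -- `∫ (dP/dQ)^α dQ = 0` would make the Hölder bound vanish, while its left side is positive.
  have hi : 0 < (∫⁻ x, P.rnDeriv Q x ^ α ∂Q).toReal := by
    refine ENNReal.toReal_nonneg.lt_of_ne fun hi0 ↦ ?_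
    rw [← hi0, zero_rpow (by positivity), mul_zero] at hHolder
    linarith
  rw [renyiDiv_eq_coe hPQ (ENNReal.toReal_pos_iff.1 hi).1.ne' htop, ← EReal.coe_sub,
    EReal.coe_le_coe_iff]
  exact inv_mul_log_sub_le_of_le_rpow_mul_rpow hα ha (integral_exp_pos hQ) hi hHolder

theorem lintegral_rnDeriv_tilted_rpow {μ : Measure S} [SigmaFinite μ] {f : S → ℝ} {α : ℝ}
    (hα : 0 ≤ α) (hf : AEMeasurable f μ) (hfα : Integrable (fun x ↦ exp (α * f x)) μ) :
    ∫⁻ x, (μ.tilted f).rnDeriv μ x ^ α ∂μ =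
      ENNReal.ofReal ((∫ x, exp (α * f x) ∂μ) / (∫ x, exp (f x) ∂μ) ^ α) := by
  have hZ : 0 ≤ ∫ x, exp (f x) ∂μ := integral_nonneg fun _ ↦ (exp_pos _).le
  calc ∫⁻ x, (μ.tilted f).rnDeriv μ x ^ α ∂μ
      = ∫⁻ x, ENNReal.ofReal (exp (α * f x) / (∫ x, exp (f x) ∂μ) ^ α) ∂μ := by
        refine lintegral_congr_ae ?_
        filter_upwards [rnDeriv_tilted_left_self hf] with x hx
        rw [hx, ENNReal.ofReal_rpow_of_nonneg (by positivity) hα, div_rpow (exp_pos _).le hZ,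
          ← exp_mul, mul_comm]
    _ = _ := by
        rw [← ofReal_integral_eq_lintegral_ofReal (hfα.div_const _)
          (ae_of_all _ fun _ ↦ by positivity), integral_div]

theorem renyiDiv_tilted {μ : Measure S} [SigmaFinite μ] [NeZero μ] {f : S → ℝ} {α : ℝ}
    (hα : 0 ≤ α) (hf : Integrable (fun x ↦ exp (f x)) μ)
    (hfα : Integrable (fun x ↦ exp (α * f x)) μ) :
    renyiDiv α (μ.tilted f) μ = ((α * (α - 1))⁻¹ *
      log ((∫ x, exp (α * f x) ∂μ) / (∫ x, exp (f x) ∂μ) ^ α) : ℝ) := by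
  have hpos : 0 < (∫ x, exp (α * f x) ∂μ) / (∫ x, exp (f x) ∂μ) ^ α :=
    div_pos (integral_exp_pos hfα) (rpow_pos_of_pos (integral_exp_pos hf) α)
  have hfm : AEMeasurable f μ := by simpa using hf.1.aemeasurable.log
  have hI := lintegral_rnDeriv_tilted_rpow hα hfm hfα
  rw [renyiDiv_eq_coe (tilted_absolutelyContinuous μ f) (by simpa [hI] using hpos)
    (by simp [hI]), hI, ENNReal.toReal_ofReal hpos.le]

theorem coe_sub_renyiDiv_tilted {α : ℝ} (hα : 1 < α) {Q : Measure S} [SigmaFinite Q] [NeZero Q]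
    {g : S → ℝ} (hg : Integrable (fun x ↦ exp (g x)) Q)
    (hgα : Integrable (fun x ↦ exp (α * g x)) Q) :
    (((α - 1)⁻¹ * log (∫ x, exp ((α - 1) * g x) ∂(Q.tilted g)) : ℝ) : EReal)
        - renyiDiv α (Q.tilted g) Q = ((α⁻¹ * log (∫ x, exp (α * g x) ∂Q) : ℝ) : EReal) := by
  have hZ := integral_exp_pos hg
  have hZα := integral_exp_pos hgα
  have hmoment : ∫ x, exp ((α - 1) * g x) ∂(Q.tilted g) =
      (∫ x, exp (α * g x) ∂Q) / ∫ x, exp (g x) ∂Q := by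
    rw [integral_exp_tilted g (fun x ↦ (α - 1) * g x)]
    congr with x
    simp only [Pi.add_apply]
    ring_nf
  rw [hmoment, renyiDiv_tilted (by linarith) hg hgα, ← EReal.coe_sub, EReal.coe_eq_coe_iff,
    log_div hZα.ne' hZ.ne', log_div hZα.ne' (rpow_pos_of_pos hZ α).ne', log_rpow hZ]
  have hα1 : α - 1 ≠ 0 := by linarith
  field_simp
  ring

end

/-- Variational formula: for a probability measure `Q`, `α > 1` and bounded measurable `g`,
`(1/α)·log ∫ e^{αg} dQ = sup_P [ (1/(α−1))·log ∫ e^{(α−1)g} dP − R_α(P‖Q) ]`,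
the supremum being over all probability measures `P`. -/
theorem renyi_variational_formula {S : Type*} [MeasurableSpace S]
    (Q : Measure S) [IsProbabilityMeasure Q] (α : ℝ) (hα : 1 < α)
    (g : S → ℝ) (hg : Measurable g) (hbd : ∃ M : ℝ, ∀ x, |g x| ≤ M) :
    ((α⁻¹ * Real.log (∫ x, Real.exp (α * g x) ∂Q) : ℝ) : EReal) =
      ⨆ P : {P : Measure S // IsProbabilityMeasure P},
        (((α - 1)⁻¹ * Real.log (∫ x, Real.exp ((α - 1) * g x) ∂(P : Measure S)) : ℝ) : EReal)
          - renyiDiv α (P : Measure S) Q := by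
  obtain ⟨M, hM⟩ := hbd
  have hint (μ : Measure S) [IsFiniteMeasure μ] (c : ℝ) :=
    integrable_exp_const_mul_of_abs_le (μ := μ) hg hM c
  have hg₁ : Integrable (fun x ↦ exp (g x)) Q := by simpa using hint Q 1
  have : IsProbabilityMeasure (Q.tilted g) := isProbabilityMeasure_tilted hg₁
  refine le_antisymm ?_ (iSup_le fun ⟨P, hP⟩ ↦ coe_sub_renyiDiv_le hα hg (hint P _) (hint Q α))
  rw [← coe_sub_renyiDiv_tilted hα hg₁ (hint Q α)]
  exact le_iSup_of_le (⟨Q.tilted g, this⟩ : {P : Measure S // IsProbabilityMeasure P}) le_rfl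
end

section
/- Let (S, 𝓕) be a measurable space, let P and Q be probability measures on it with Q ≪ P, let α > 1, and let A ∈ 𝓕 satisfy Q(A) > 0. Then log Q(A) ≤ ((α−1)/α)·log P(A) + (α−1)·R_α(Q‖P). -/
open MeasureTheory Classical

/-- Robust Rényi bound (upper bound): if `Q ≪ P`, `α > 1` and `Q(A) > 0`, then
`log Q(A) ≤ ((α−1)/α)·log P(A) + (α−1)·R_α(Q‖P)`. -/
theorem renyi_upper_bound {S : Type*} [MeasurableSpace S]
    (P Q : Measure S) [IsProbabilityMeasure P] [IsProbabilityMeasure Q]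
    (hQP : Q ≪ P) (α : ℝ) (hα : 1 < α)
    (A : Set S) (hA : MeasurableSet A) (hQA : 0 < Q A) :
    ((Real.log (Q A).toReal : ℝ) : EReal) ≤
      (((α - 1) / α * Real.log (P A).toReal : ℝ) : EReal)
        + (((α - 1 : ℝ)) : EReal) * renyiDiv α Q P := by
  have hα0 : (0 : ℝ) < α := lt_trans one_pos hα
  have hα1 : (0 : ℝ) < α - 1 := by linarith
  set f := Q.rnDeriv P with hf
  set I := ∫⁻ x, f x ^ α ∂P with hI
  -- conjugate exponent
  have hpq : Real.HolderConjugate α (α / (α - 1)) := Real.HolderConjugate.conjExponent hα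
  -- Hölder's inequality
  have holder := ENNReal.lintegral_mul_le_Lp_mul_Lq P hpq
    (Measure.measurable_rnDeriv Q P).aemeasurable
    ((measurable_one.indicator hA : Measurable (A.indicator (1 : S → ENNReal)))).aemeasurable
  have h1 : ∫⁻ a,  (f * A.indicator (1 : S → ENNReal)) a ∂P = Q A := by
    have : (f * A.indicator (1 : S → ENNReal)) = A.indicator f := by
      funext a
      by_cases ha : a ∈ A <;> simp [ha]
    rw [this, lintegral_indicator hA, Measure.setLIntegral_rnDeriv hQP]
  have h2 : ∫⁻ a, (A.indicator (1 : S → ENNReal)) a ^ (α / (α - 1)) ∂P = P A := by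
    have : (fun a => (A.indicator (1 : S → ENNReal)) a ^ (α / (α - 1))) =
        A.indicator 1 := by
      funext a
      by_cases ha : a ∈ A
      · simp [ha]
      · simp [ha, ENNReal.zero_rpow_of_pos (by positivity : (0:ℝ) < α / (α - 1))]
    rw [this, lintegral_indicator_one hA]
  rw [h1, h2] at holder
  have hinv : 1 / (α / (α - 1)) = (α - 1) / α := by
    field_simp
  rw [hinv] at holder
  change Q A ≤ I ^ (1/α) * P A ^ ((α-1)/α) at holder
  -- holder : Q A ≤ I ^ (1/α) * P A ^ ((α-1)/α)
  have hI0 : I ≠ 0 := by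
    intro h0
    rw [h0, ENNReal.zero_rpow_of_pos (by positivity : (0:ℝ) < 1/α), zero_mul] at holder
    exact absurd (le_antisymm holder hQA.le) hQA.ne'
  have hPA0 : P A ≠ 0 := fun h0 => hQA.ne' (hQP h0)
  have hPAtop : P A ≠ ⊤ := measure_ne_top P A
  have hQAtop : Q A ≠ ⊤ := measure_ne_top Q A
  have hrenyi : renyiDiv α Q P =
      (((α * (α - 1))⁻¹ : ℝ) : EReal) * ENNReal.log I := by
    rw [renyiDiv, if_pos hQP]
  by_cases hItop : I = ⊤
  · -- RHS is ⊤
    rw [hrenyi, hItop, ENNReal.log_top, EReal.coe_mul_top_of_pos (by positivity),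
      EReal.coe_mul_top_of_pos (by exact_mod_cast hα1)]
    rw [EReal.add_top_of_ne_bot (EReal.coe_ne_bot _)]
    exact le_top
  · -- everything is finite; reduce to a real inequality
    have hIt0 : 0 < I.toReal := ENNReal.toReal_pos hI0 hItop
    have hlogI : ENNReal.log I = ((Real.log I.toReal : ℝ) : EReal) :=
      ENNReal.log_pos_real' hIt0
    rw [hrenyi, hlogI, ← EReal.coe_mul, ← EReal.coe_mul, ← EReal.coe_add,
      EReal.coe_le_coe_iff]
    -- real inequality
    have hPAt0 : 0 < (P A).toReal := ENNReal.toReal_pos hPA0 hPAtop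
    have hQAt0 : 0 < (Q A).toReal := ENNReal.toReal_pos hQA.ne' hQAtop
    have hItop1 : I ^ (1/α) ≠ ⊤ := ENNReal.rpow_ne_top_of_nonneg (by positivity) hItop
    have hPtop1 : P A ^ ((α-1)/α) ≠ ⊤ := ENNReal.rpow_ne_top_of_nonneg (by positivity) hPAtop
    have hto : (Q A).toReal ≤ I.toReal ^ (1/α) * (P A).toReal ^ ((α-1)/α) := by
      have := ENNReal.toReal_mono (by exact ENNReal.mul_ne_top hItop1 hPtop1) holder
      rwa [ENNReal.toReal_mul, ← ENNReal.toReal_rpow, ← ENNReal.toReal_rpow] at this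
    have hlog := Real.log_le_log hQAt0 hto
    rw [Real.log_mul (by positivity) (by positivity),
      Real.log_rpow hIt0, Real.log_rpow hPAt0] at hlog
    have hcoef : (α - 1) * ((α * (α - 1))⁻¹ * Real.log I.toReal)
        = 1/α * Real.log I.toReal := by
      field_simp
    rw [hcoef]
    linarith
end

section
/- Let (S, 𝓕) be a measurable space, let P and Q be probability measures on it with P ≪ Q, let α > 1, and let A ∈ 𝓕 satisfy P(A) > 0. Then (α/(α−1))·log P(A) − α·R_α(P‖Q) ≤ log Q(A). -/
open MeasureTheory Classical

open scoped ENNReal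

/-!
With `f = dP/dQ`, Hölder's inequality for `f · 1_A` with exponents `α` and `α/(α-1)` gives
`P(A) = ∫_A f dQ ≤ (∫ f^α dQ)^(1/α) · Q(A)^(1-1/α)`, i.e. `P(A)^α ≤ (∫ f^α dQ) · Q(A)^(α-1)`.
Taking logarithms and dividing by `α - 1` is the claim, since `α R_α(P‖Q) = log (∫ f^α dQ) / (α-1)`.
-/

theorem lintegral_rpow_le_lintegral_rpow_mul_measure_univ {S : Type*} [MeasurableSpace S]
    {μ : Measure S} {f : S → ℝ≥0∞} (hf : AEMeasurable f μ) {p : ℝ} (hp : 1 ≤ p) :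
    (∫⁻ x, f x ∂μ) ^ p ≤ (∫⁻ x, f x ^ p ∂μ) * μ Set.univ ^ (p - 1) := by
  have holder := eLpNorm'_le_eLpNorm'_mul_rpow_measure_univ one_pos hp hf.aestronglyMeasurable
  simp only [eLpNorm'_eq_lintegral_enorm, enorm_eq_self, ENNReal.rpow_one, div_one] at holder
  have hp0 : 0 < p := one_pos.trans_le hp
  calc (∫⁻ x, f x ∂μ) ^ p
      ≤ ((∫⁻ x, f x ^ p ∂μ) ^ (1 / p) * μ Set.univ ^ (1 - 1 / p)) ^ p := by gcongr
    _ = (∫⁻ x, f x ^ p ∂μ) * μ Set.univ ^ (p - 1) := by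
      rw [ENNReal.mul_rpow_of_nonneg _ _ hp0.le, ← ENNReal.rpow_mul, ← ENNReal.rpow_mul,
        one_div_mul_cancel hp0.ne', ENNReal.rpow_one, sub_mul, one_mul,
        one_div_mul_cancel hp0.ne']

theorem measure_rpow_le_lintegral_rnDeriv_rpow_mul {S : Type*} [MeasurableSpace S]
    {P Q : Measure S} [SFinite Q] [P.HaveLebesgueDecomposition Q] (hPQ : P ≪ Q)
    {α : ℝ} (hα : 1 ≤ α) (A : Set S) :
    P A ^ α ≤ (∫⁻ x, P.rnDeriv Q x ^ α ∂Q) * Q A ^ (α - 1) := by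
  calc P A ^ α = (∫⁻ x in A, P.rnDeriv Q x ∂Q) ^ α := by
        rw [Measure.setLIntegral_rnDeriv hPQ]
    _ ≤ (∫⁻ x in A, P.rnDeriv Q x ^ α ∂Q) * Q.restrict A Set.univ ^ (α - 1) :=
        lintegral_rpow_le_lintegral_rpow_mul_measure_univ
          (Measure.measurable_rnDeriv P Q).aemeasurable hα
    _ ≤ (∫⁻ x, P.rnDeriv Q x ^ α ∂Q) * Q A ^ (α - 1) := by
        rw [Measure.restrict_apply_univ]
        exact mul_le_mul_left (setLIntegral_le_lintegral A _) _

theorem log_le_of_rpow_le_mul_rpow {x y z α : ℝ} (hα : 1 < α) (hx : 0 < x) (hy : 0 < y)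
    (hz : 0 < z) (h : x ^ α ≤ y * z ^ (α - 1)) :
    α / (α - 1) * Real.log x - α * ((α * (α - 1))⁻¹ * Real.log y) ≤ Real.log z := by
  have hlog : α * Real.log x ≤ Real.log y + (α - 1) * Real.log z := by
    have := Real.log_le_log (by positivity) h
    rwa [Real.log_rpow hx, Real.log_mul hy.ne' (by positivity), Real.log_rpow hz] at this
  have hα1 : 0 < α - 1 := sub_pos.mpr hα
  rw [show α / (α - 1) * Real.log x - α * ((α * (α - 1))⁻¹ * Real.log y)
      = (α * Real.log x - Real.log y) / (α - 1) by field_simp, div_le_iff₀ hα1]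
  linarith

section renyiDiv

variable {S : Type*} [MeasurableSpace S] {P Q : Measure S} {α : ℝ}

theorem renyiDiv_eq_top_of_lintegral_eq_top (hα : 1 < α) (hPQ : P ≪ Q)
    (h : ∫⁻ x, P.rnDeriv Q x ^ α ∂Q = ∞) : renyiDiv α P Q = ⊤ := by
  have hcoef : 0 < (α * (α - 1))⁻¹ := by
    have : 0 < α - 1 := sub_pos.mpr hα
    positivity
  rw [renyiDiv, if_pos hPQ, h, ENNReal.log_top, EReal.coe_mul_top_of_pos hcoef]

theorem renyiDiv_eq_coe_log_toReal (hPQ : P ≪ Q)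
    (h0 : ∫⁻ x, P.rnDeriv Q x ^ α ∂Q ≠ 0) (htop : ∫⁻ x, P.rnDeriv Q x ^ α ∂Q ≠ ∞) :
    renyiDiv α P Q =
      (((α * (α - 1))⁻¹ * Real.log (∫⁻ x, P.rnDeriv Q x ^ α ∂Q).toReal : ℝ) : EReal) := by
  rw [renyiDiv, if_pos hPQ, ENNReal.log_pos_real' (ENNReal.toReal_pos h0 htop), EReal.coe_mul]

end renyiDiv

theorem renyi_lower_bound_general {S : Type*} [MeasurableSpace S]
    (P Q : Measure S) [IsProbabilityMeasure P] [IsProbabilityMeasure Q]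
    (hPQ : P ≪ Q) (α : ℝ) (hα : 1 < α)
    (A : Set S) (hPA : 0 < P A) :
    ((α / (α - 1) * Real.log (P A).toReal : ℝ) : EReal)
        - ((α : ℝ) : EReal) * renyiDiv α P Q ≤
      ((Real.log (Q A).toReal : ℝ) : EReal) := by
  have holder := measure_rpow_le_lintegral_rnDeriv_rpow_mul hPQ hα.le A
  set I := ∫⁻ x, P.rnDeriv Q x ^ α ∂Q
  obtain hItop | hItop := eq_or_ne I ∞
  · rw [renyiDiv_eq_top_of_lintegral_eq_top hα hPQ hItop,
      EReal.mul_top_of_pos (EReal.coe_pos.mpr (one_pos.trans hα)), EReal.sub_top]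
    exact bot_le
  have hI0 : I ≠ 0 := fun hI0 ↦
    (ENNReal.rpow_pos hPA (measure_ne_top P A)).not_ge (by simpa [hI0] using holder)
  have holder_real : (P A).toReal ^ α ≤ I.toReal * (Q A).toReal ^ (α - 1) := by
    have := ENNReal.toReal_mono (by finiteness) holder
    rwa [ENNReal.toReal_mul, ← ENNReal.toReal_rpow, ← ENNReal.toReal_rpow] at this
  rw [renyiDiv_eq_coe_log_toReal hPQ hI0 hItop]
  exact_mod_cast log_le_of_rpow_le_mul_rpow hα
    (ENNReal.toReal_pos hPA.ne' (measure_ne_top P A)) (ENNReal.toReal_pos hI0 hItop)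
    (ENNReal.toReal_pos (fun h ↦ hPA.ne' (hPQ h)) (measure_ne_top Q A)) holder_real

/-- Robust Rényi bound (lower bound): if `P ≪ Q`, `α > 1` and `P(A) > 0`, then
`(α/(α−1))·log P(A) − α·R_α(P‖Q) ≤ log Q(A)`. -/
theorem renyi_lower_bound {S : Type*} [MeasurableSpace S]
    (P Q : Measure S) [IsProbabilityMeasure P] [IsProbabilityMeasure Q]
    (hPQ : P ≪ Q) (α : ℝ) (hα : 1 < α)
    (A : Set S) (hA : MeasurableSet A) (hPA : 0 < P A) :
    ((α / (α - 1) * Real.log (P A).toReal : ℝ) : EReal)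
        - ((α : ℝ) : EReal) * renyiDiv α P Q ≤
      ((Real.log (Q A).toReal : ℝ) : EReal) :=
  renyi_lower_bound_general P Q hPQ α hα A hPA
end

section
/- Let (S, 𝓕) be a measurable space, let P and Q be probability measures on it with Q ≪ P, let α > 1, and let g : S → ℝ be bounded and measurable. Then log ∫ e^{(α−1) g} dQ ≤ ((α−1)/α)·log ∫ e^{α g} dP + (α−1)·R_α(Q‖P). -/
/-! Write `∫ e^{(α-1)g} dQ = ∫ e^{(α-1)g} (dQ/dP) dP` and apply Hölder's inequality with the
conjugate exponents `α/(α-1)` and `α`; taking logarithms gives the bound. The logarithm is taken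
as `ENNReal.log` with values in `EReal`, so an infinite moment `∫ (dQ/dP)^α dP = ∞` needs no
separate case. -/

open MeasureTheory Classical

section

variable {S : Type*} [MeasurableSpace S]

theorem lintegral_le_mul_lintegral_rnDeriv_rpow {μ ν : Measure S}
    [μ.HaveLebesgueDecomposition ν] (hμν : μ ≪ ν) {p q : ℝ} (hpq : p.HolderConjugate q)
    {φ : S → ENNReal} (hφ : AEMeasurable φ ν) :
    ∫⁻ x, φ x ∂μ ≤
      (∫⁻ x, φ x ^ p ∂ν) ^ (1 / p) * (∫⁻ x, μ.rnDeriv ν x ^ q ∂ν) ^ (1 / q) := by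
  rw [← lintegral_rnDeriv_mul hμν hφ]
  simpa only [Pi.mul_apply, mul_comm] using
    ENNReal.lintegral_mul_le_Lp_mul_Lq ν hpq hφ (Measure.measurable_rnDeriv μ ν).aemeasurable

theorem log_lintegral_le_add_log_lintegral_rnDeriv_rpow {μ ν : Measure S}
    [μ.HaveLebesgueDecomposition ν] (hμν : μ ≪ ν) {p q : ℝ} (hpq : p.HolderConjugate q)
    {φ : S → ENNReal} (hφ : AEMeasurable φ ν) :
    ENNReal.log (∫⁻ x, φ x ∂μ) ≤
      ((1 / p : ℝ) : EReal) * ENNReal.log (∫⁻ x, φ x ^ p ∂ν)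
        + ((1 / q : ℝ) : EReal) * ENNReal.log (∫⁻ x, μ.rnDeriv ν x ^ q ∂ν) := by
  rw [← ENNReal.log_rpow, ← ENNReal.log_rpow, ← ENNReal.log_mul_add]
  exact ENNReal.log_le_log
    (lintegral_le_mul_lintegral_rnDeriv_rpow hμν hpq hφ)

theorem integrable_exp_of_abs_le {μ : Measure S} [IsFiniteMeasure μ] {g : S → ℝ}
    (hg : AEStronglyMeasurable g μ) {M : ℝ} (hM : ∀ x, |g x| ≤ M) :
    Integrable (fun x => Real.exp (g x)) μ :=
  Integrable.of_bound (Real.continuous_exp.comp_aestronglyMeasurable hg) (Real.exp M) <|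
    .of_forall fun x => by simpa [Real.abs_exp] using (abs_le.mp (hM x)).2

theorem coe_log_integral_exp {μ : Measure S} [NeZero μ] {g : S → ℝ}
    (hg : Integrable (fun x => Real.exp (g x)) μ) :
    (Real.log (∫ x, Real.exp (g x) ∂μ) : EReal) =
      ENNReal.log (∫⁻ x, ENNReal.ofReal (Real.exp (g x)) ∂μ) := by
  rw [← ofReal_integral_eq_lintegral_ofReal hg (.of_forall fun x => (Real.exp_pos _).le),
    ENNReal.log_ofReal_of_pos (integral_exp_pos hg)]

theorem ENNReal.ofReal_exp_rpow (a b : ℝ) :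
    ENNReal.ofReal (Real.exp a) ^ b = ENNReal.ofReal (Real.exp (a * b)) := by
  rw [ENNReal.ofReal_rpow_of_pos (Real.exp_pos a), ← Real.exp_mul]

end

/-- Robust Rényi bound for risk-sensitive costs: if `Q ≪ P`, `α > 1` and `g` is
bounded measurable, then
`log ∫ e^{(α−1)g} dQ ≤ ((α−1)/α)·log ∫ e^{αg} dP + (α−1)·R_α(Q‖P)`. -/
theorem renyi_risk_sensitive_bound {S : Type*} [MeasurableSpace S]
    (P Q : Measure S) [IsProbabilityMeasure P] [IsProbabilityMeasure Q]
    (hQP : Q ≪ P) (α : ℝ) (hα : 1 < α)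
    (g : S → ℝ) (hg : Measurable g) (hbd : ∃ M : ℝ, ∀ x, |g x| ≤ M) :
    ((Real.log (∫ x, Real.exp ((α - 1) * g x) ∂Q) : ℝ) : EReal) ≤
      (((α - 1) / α * Real.log (∫ x, Real.exp (α * g x) ∂P) : ℝ) : EReal)
        + (((α - 1 : ℝ)) : EReal) * renyiDiv α Q P := by
  obtain ⟨M, hM⟩ := hbd
  have hexp_integrable (μ : Measure S) [IsProbabilityMeasure μ] (c : ℝ) :
      Integrable (fun x => Real.exp (c * g x)) μ :=
    integrable_exp_of_abs_le (hg.const_mul c).aestronglyMeasurable (M := |c| * M) fun x => by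
      rw [abs_mul]; exact mul_le_mul_of_nonneg_left (hM x) (abs_nonneg c)
  have hpq : (α / (α - 1)).HolderConjugate α := (Real.HolderConjugate.conjExponent hα).symm
  have hexp_rpow (x : S) : (α - 1) * g x * (α / (α - 1)) = α * g x := by
    field_simp [(sub_pos.mpr hα).ne']
  have hcoef :
      ((α - 1 : ℝ) : EReal) * (((α * (α - 1))⁻¹ : ℝ) : EReal) = ((1 / α : ℝ) : EReal) := by
    rw [← EReal.coe_mul]; congr 1; field_simp [(sub_pos.mpr hα).ne']
  have hholder := log_lintegral_le_add_log_lintegral_rnDeriv_rpow hQP hpq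
    (φ := fun x => ENNReal.ofReal (Real.exp ((α - 1) * g x))) (by fun_prop)
  simp only [ENNReal.ofReal_exp_rpow, hexp_rpow] at hholder
  rw [coe_log_integral_exp (hexp_integrable Q _), renyiDiv, if_pos hQP, ← mul_assoc, hcoef,
    EReal.coe_mul, coe_log_integral_exp (hexp_integrable P _)]
  convert hholder using 3
  rw [one_div_div]
end

section
/- Let (S, 𝓕) be a measurable space, let P₁ and Q₁ be probability measures on it with Q₁ ≪ P₁, and let α > 1. For n ∈ ℕ, let Pₙ and Qₙ denote the n-fold product measures of P₁ and Q₁ on Sⁿ. Then for every measurable set Aₙ ⊆ Sⁿ with Qₙ(Aₙ) > 0, one has (1/n)·log Qₙ(Aₙ) ≤ ((α−1)/α)·(1/n)·log Pₙ(Aₙ) + (α−1)·R_α(Q₁‖P₁). -/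
/-!
Write `f = dQ₁/dP₁`. Since `Qₙ = Pₙ.withDensity (x ↦ ∏ᵢ f (xᵢ))`, Hölder's inequality with
exponents `α` and `α/(α-1)` gives
`Qₙ(A) ≤ (∫ ∏ᵢ f(xᵢ)^α dPₙ)^(1/α) · Pₙ(A)^((α-1)/α) = (∫ f^α dP₁)^(n/α) · Pₙ(A)^((α-1)/α)`,
and `(1/α) · log ∫ f^α dP₁ = (α-1) · R_α(Q₁‖P₁)`. Taking logarithms and dividing by `n`
gives the bound.
-/

open MeasureTheory Classical

open ProbabilityTheory
open scoped ENNReal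

lemma withDensity_apply_le_lintegral_rpow_mul_measure_rpow {X : Type*} [MeasurableSpace X]
    {μ : Measure X} [SFinite μ] {f : X → ℝ≥0∞} (hf : AEMeasurable f μ) {α : ℝ} (hα : 1 < α)
    (s : Set X) :
    μ.withDensity f s ≤ (∫⁻ x, f x ^ α ∂μ) ^ α⁻¹ * μ s ^ ((α - 1) / α) := by
  have hpq : α.HolderConjugate (α / (α - 1)) := .conjExponent hα
  calc μ.withDensity f s = ∫⁻ x in s, (f * 1) x ∂μ := by simp [withDensity_apply']
    _ ≤ (∫⁻ x in s, f x ^ α ∂μ) ^ (1 / α)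
          * (∫⁻ x in s, 1 ^ (α / (α - 1)) ∂μ) ^ (1 / (α / (α - 1))) :=
        ENNReal.lintegral_mul_le_Lp_mul_Lq _ hpq hf.restrict aemeasurable_const
    _ ≤ (∫⁻ x, f x ^ α ∂μ) ^ α⁻¹ * μ s ^ ((α - 1) / α) := by
        rw [one_div, one_div_div]
        gcongr
        · exact Measure.restrict_le_self
        · simp

section Pi

variable {ι : Type*} [Fintype ι] {Ω : ι → Type*} [∀ i, MeasurableSpace (Ω i)]
  {μ ν : ∀ i, Measure (Ω i)} [∀ i, IsProbabilityMeasure (μ i)] [∀ i, SigmaFinite (ν i)]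

lemma lintegral_pi_prod_eq_prod_lintegral {f : ∀ i, Ω i → ℝ≥0∞} (hf : ∀ i, Measurable (f i)) :
    ∫⁻ x, ∏ i, f i (x i) ∂Measure.pi μ = ∏ i, ∫⁻ y, f i y ∂μ i := by
  rw [lintegral_prod_eq_prod_lintegral_of_indepFun _ _
    (iIndepFun_pi fun i => (hf i).aemeasurable) fun i => (hf i).comp (measurable_pi_apply i)]
  exact Finset.prod_congr rfl fun i _ => (measurePreserving_eval μ i).lintegral_comp (hf i)

lemma pi_eq_withDensity_prod_rnDeriv (hνμ : ∀ i, ν i ≪ μ i) :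
    Measure.pi ν = (Measure.pi μ).withDensity fun x => ∏ i, (ν i).rnDeriv (μ i) (x i) := by
  refine Measure.pi_eq fun s hs => ?_
  have h_indicator : (Set.univ.pi s).indicator (fun x => ∏ i, (ν i).rnDeriv (μ i) (x i)) =
      fun x => ∏ i, (s i).indicator ((ν i).rnDeriv (μ i)) (x i) := by
    ext x
    simp only [Set.indicator_apply, Set.mem_univ_pi, Fintype.prod_ite_zero]
  rw [withDensity_apply _ (.univ_pi hs), ← lintegral_indicator (.univ_pi hs), h_indicator,
    lintegral_pi_prod_eq_prod_lintegral fun i => (Measure.measurable_rnDeriv _ _).indicator (hs i)]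
  simp only [lintegral_indicator (hs _), Measure.setLIntegral_rnDeriv (hνμ _)]

lemma measure_pi_le_prod_lintegral_rnDeriv_rpow (hνμ : ∀ i, ν i ≪ μ i) {α : ℝ} (hα : 1 < α)
    (s : Set (∀ i, Ω i)) :
    Measure.pi ν s ≤ (∏ i, ∫⁻ x, (ν i).rnDeriv (μ i) x ^ α ∂μ i) ^ α⁻¹
      * Measure.pi μ s ^ ((α - 1) / α) := by
  have hf : ∀ i, Measurable ((ν i).rnDeriv (μ i)) := fun i => Measure.measurable_rnDeriv _ _
  rw [pi_eq_withDensity_prod_rnDeriv hνμ]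
  refine (withDensity_apply_le_lintegral_rpow_mul_measure_rpow
    (by fun_prop : Measurable fun x : ∀ i, Ω i => ∏ i, (ν i).rnDeriv (μ i) (x i)).aemeasurable
    hα s).trans_eq ?_
  simp_rw [← ENNReal.prod_rpow_of_nonneg (by linarith : 0 ≤ α)]
  rw [lintegral_pi_prod_eq_prod_lintegral fun i => (hf i).pow_const α]

end Pi

lemma one_le_lintegral_rnDeriv_rpow {S : Type*} [MeasurableSpace S] {P Q : Measure S}
    [IsProbabilityMeasure P] [IsProbabilityMeasure Q] (hQP : Q ≪ P) {α : ℝ} (hα : 1 < α) :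
    1 ≤ ∫⁻ x, Q.rnDeriv P x ^ α ∂P := by
  have h := withDensity_apply_le_lintegral_rpow_mul_measure_rpow (μ := P)
    (Measure.measurable_rnDeriv Q P).aemeasurable hα Set.univ
  rw [Measure.withDensity_rnDeriv_eq Q P hQP, measure_univ, measure_univ, ENNReal.one_rpow,
    mul_one, ENNReal.le_rpow_inv_iff (by linarith), ENNReal.one_rpow] at h
  exact h

lemma sub_one_mul_renyiDiv {S : Type*} [MeasurableSpace S] {P Q : Measure S} (hQP : Q ≪ P)
    {α : ℝ} (hα : α ≠ 1) :
    ((α - 1 : ℝ) : EReal) * renyiDiv α Q P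
      = ((α⁻¹ : ℝ) : EReal) * ENNReal.log (∫⁻ x, Q.rnDeriv P x ^ α ∂P) := by
  rw [renyiDiv, if_pos hQP, ← mul_assoc, ← EReal.coe_mul]
  congr 3
  by_cases hα₀ : α = 0
  · simp [hα₀]
  field_simp

lemma inv_mul_log_le_of_le_rpow_mul_rpow {n : ℕ} {α c p q : ℝ} (hα : 1 < α) (hc : 1 ≤ c)
    (hp : 0 ≤ p) (hq : 0 < q) (h : q ≤ (c ^ n) ^ α⁻¹ * p ^ ((α - 1) / α)) :
    (n : ℝ)⁻¹ * Real.log q ≤ (α - 1) / α * ((n : ℝ)⁻¹ * Real.log p) + α⁻¹ * Real.log c := by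
  have hα₀ : 0 < α := by linarith
  rcases n.eq_zero_or_pos with rfl | hn
  -- `(0 : ℝ)⁻¹ = 0`, so for `n = 0` the claim reduces to `0 ≤ α⁻¹ * log c`.
  · simpa using mul_nonneg (inv_nonneg.mpr hα₀.le) (Real.log_nonneg hc)
  have hp₀ : 0 < p := by
    refine hp.lt_of_ne' fun hp₀ => hq.not_ge ?_
    rw [hp₀, Real.zero_rpow (div_pos (by linarith) hα₀).ne', mul_zero] at h
    exact h
  have hlog : Real.log q ≤ α⁻¹ * (n * Real.log c) + (α - 1) / α * Real.log p := by
    calc Real.log q ≤ Real.log ((c ^ n) ^ α⁻¹ * p ^ ((α - 1) / α)) := Real.log_le_log hq h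
      _ = α⁻¹ * (n * Real.log c) + (α - 1) / α * Real.log p := by
        rw [Real.log_mul (by positivity) (by positivity), Real.log_rpow (by positivity),
          Real.log_rpow hp₀, Real.log_pow]
  rw [inv_mul_le_iff₀ (by exact_mod_cast hn)]
  refine hlog.trans_eq ?_
  field_simp
  ring

theorem renyi_iid_scaling_bound_general {S : Type*} [MeasurableSpace S]
    (P₁ Q₁ : Measure S) [IsProbabilityMeasure P₁] [IsProbabilityMeasure Q₁]
    (hQP : Q₁ ≪ P₁) (α : ℝ) (hα : 1 < α) (n : ℕ)
    (A : Set (Fin n → S))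
    (hQA : 0 < Measure.pi (fun _ : Fin n => Q₁) A) :
    (((n : ℝ)⁻¹ * Real.log ((Measure.pi (fun _ : Fin n => Q₁)) A).toReal : ℝ) : EReal) ≤
      (((α - 1) / α * ((n : ℝ)⁻¹
          * Real.log ((Measure.pi (fun _ : Fin n => P₁)) A).toReal) : ℝ) : EReal)
        + (((α - 1 : ℝ)) : EReal) * renyiDiv α Q₁ P₁ := by
  set I := ∫⁻ x, Q₁.rnDeriv P₁ x ^ α ∂P₁ with hI_def
  have hI : 1 ≤ I := one_le_lintegral_rnDeriv_rpow hQP hα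
  rw [sub_one_mul_renyiDiv hQP hα.ne', ← hI_def]
  rcases eq_or_ne I ⊤ with hI_top | hI_top
  · rw [hI_top, ENNReal.log_top, EReal.coe_mul_top_of_pos (by positivity),
      EReal.add_top_of_ne_bot (EReal.coe_ne_bot _)]
    exact le_top
  have key := measure_pi_le_prod_lintegral_rnDeriv_rpow (fun _ => hQP) hα A
  rw [Finset.prod_const, Finset.card_univ, Fintype.card_fin, ← hI_def] at key
  have key_real := ENNReal.toReal_mono (by finiteness) key
  rw [ENNReal.toReal_mul, ← ENNReal.toReal_rpow, ← ENNReal.toReal_rpow, ENNReal.toReal_pow]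
    at key_real
  rw [ENNReal.log_pos_real (one_pos.trans_le hI).ne' hI_top, ← EReal.coe_mul, ← EReal.coe_add,
    EReal.coe_le_coe_iff]
  exact inv_mul_log_le_of_le_rpow_mul_rpow hα (by simpa using ENNReal.toReal_mono hI_top hI)
    ENNReal.toReal_nonneg (ENNReal.toReal_pos hQA.ne' (by finiteness)) key_real

/-- Robust Rényi bound under IID scaling: if `Q₁ ≪ P₁` and `α > 1`, then for the
`n`-fold product measures and any measurable `Aₙ ⊆ Sⁿ` with `Qₙ(Aₙ) > 0`,
`(1/n)·log Qₙ(Aₙ) ≤ ((α−1)/α)·(1/n)·log Pₙ(Aₙ) + (α−1)·R_α(Q₁‖P₁)`. -/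
theorem renyi_iid_scaling_bound {S : Type*} [MeasurableSpace S]
    (P₁ Q₁ : Measure S) [IsProbabilityMeasure P₁] [IsProbabilityMeasure Q₁]
    (hQP : Q₁ ≪ P₁) (α : ℝ) (hα : 1 < α) (n : ℕ)
    (A : Set (Fin n → S)) (hA : MeasurableSet A)
    (hQA : 0 < Measure.pi (fun _ : Fin n => Q₁) A) :
    (((n : ℝ)⁻¹ * Real.log ((Measure.pi (fun _ : Fin n => Q₁)) A).toReal : ℝ) : EReal) ≤
      (((α - 1) / α * ((n : ℝ)⁻¹
          * Real.log ((Measure.pi (fun _ : Fin n => P₁)) A).toReal) : ℝ) : EReal)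
        + (((α - 1 : ℝ)) : EReal) * renyiDiv α Q₁ P₁ :=
  renyi_iid_scaling_bound_general P₁ Q₁ hQP α hα n A hQA
end

section
/- Let α > 1 and x > 0. The Rényi divergence of degree α of a Poisson distribution with parameter x with respect to a Poisson distribution with parameter 1 equals k_α(x) = (x^α − αx + α − 1)/(α(α−1)). Equivalently, (1/(α(α−1)))·log ∑_{n=0}^∞ (x^n e^{−x}/n!)^α · (e^{−1}/n!)^{1−α} = (x^α − αx + α − 1)/(α(α−1)). -/
open MeasureTheory Classical

/-- The Poisson distribution with parameter `x > 0`, as a measure on `ℕ`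
assigning mass `x^n e^{−x}/n!` to `n`. -/
noncomputable def poissonMeasure (x : ℝ) : Measure ℕ :=
  Measure.count.withDensity
    (fun n => ENNReal.ofReal (x ^ n * Real.exp (-x) / n.factorial))

/-!
The Radon–Nikodym derivative of `Po(x)` with respect to `Po(l)` is `n ↦ e^{l-x} (x/l)^n`, so its
`α`-th power is `e^{α(l-x)} t^n` with `t = (x/l)^α`, and integrating `t^n` against `Po(l)` gives
the generating function `e^{l(t-1)}`. For `l = 1` the exponent is `x^α - αx + α - 1`.
-/

theorem renyiDiv_withDensity {S : Type*} [MeasurableSpace S] (α : ℝ) (P : Measure S)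
    [SigmaFinite P] {h : S → ENNReal} (hh : Measurable h) :
    renyiDiv α (P.withDensity h) P =
      (((α * (α - 1))⁻¹ : ℝ) : EReal) * ENNReal.log (∫⁻ x, h x ^ α ∂P) := by
  rw [renyiDiv, if_pos (withDensity_absolutelyContinuous P h)]
  congr 2
  exact lintegral_congr_ae <|
    (Measure.rnDeriv_withDensity P hh).mono fun x hx => congrArg (· ^ α) hx

section Poisson

open Real

noncomputable def poissonMass (x : ℝ) (n : ℕ) : ℝ := x ^ n * exp (-x) / n.factorial

noncomputable def poissonRatio (x l : ℝ) (n : ℕ) : ℝ := exp (l - x) * (x / l) ^ n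

theorem poissonMass_nonneg {x : ℝ} (hx : 0 ≤ x) (n : ℕ) : 0 ≤ poissonMass x n := by
  unfold poissonMass; positivity

theorem poissonMass_pos {x : ℝ} (hx : 0 < x) (n : ℕ) : 0 < poissonMass x n := by
  unfold poissonMass; positivity

theorem poissonMeasure_eq_withDensity_poissonMass (x : ℝ) :
    poissonMeasure x = Measure.count.withDensity fun n => ENNReal.ofReal (poissonMass x n) :=
  rfl

instance (x : ℝ) : SigmaFinite (poissonMeasure x) := SigmaFinite.withDensity_ofReal _

theorem hasSum_poissonMass_mul_pow (l t : ℝ) :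
    HasSum (fun n => poissonMass l n * t ^ n) (exp (l * (t - 1))) := by
  have h := (NormedSpace.expSeries_div_hasSum_exp (l * t)).mul_left (exp (-l))
  rw [← exp_eq_exp_ℝ, ← exp_add, neg_add_eq_sub, ← mul_sub_one] at h
  convert! h using 2 with n
  unfold poissonMass
  ring

theorem lintegral_ofReal_pow_poissonMeasure {l t : ℝ} (hl : 0 ≤ l) (ht : 0 ≤ t) :
    ∫⁻ n, ENNReal.ofReal (t ^ n) ∂poissonMeasure l = ENNReal.ofReal (exp (l * (t - 1))) := by
  rw [poissonMeasure_eq_withDensity_poissonMass,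
    lintegral_withDensity_eq_lintegral_mul _ (by fun_prop) (by fun_prop), lintegral_count,
    ← (hasSum_poissonMass_mul_pow l t).tsum_eq,
    ENNReal.ofReal_tsum_of_nonneg (fun n => mul_nonneg (poissonMass_nonneg hl n) (by positivity))
      (hasSum_poissonMass_mul_pow l t).summable]
  exact tsum_congr fun n => (ENNReal.ofReal_mul (poissonMass_nonneg hl n)).symm

theorem poissonMass_eq_mul_poissonRatio (x : ℝ) {l : ℝ} (hl : 0 < l) (n : ℕ) :
    poissonMass x n = poissonMass l n * poissonRatio x l n := by
  unfold poissonMass poissonRatio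
  rw [div_pow, sub_eq_add_neg, exp_add]
  field_simp
  rw [mul_assoc, ← exp_add, neg_add_cancel, exp_zero, mul_one]

theorem poissonMeasure_eq_withDensity_poissonRatio (x : ℝ) {l : ℝ} (hl : 0 < l) :
    poissonMeasure x =
      (poissonMeasure l).withDensity fun n => ENNReal.ofReal (poissonRatio x l n) := by
  rw [poissonMeasure_eq_withDensity_poissonMass, poissonMeasure_eq_withDensity_poissonMass,
    ← withDensity_mul _ (by fun_prop) (by fun_prop)]
  congr 1
  ext n
  rw [Pi.mul_apply, ← ENNReal.ofReal_mul (poissonMass_nonneg hl.le n),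
    poissonMass_eq_mul_poissonRatio x hl]

theorem poissonRatio_pos {x l : ℝ} (hx : 0 < x) (hl : 0 < l) (n : ℕ) :
    0 < poissonRatio x l n := by
  unfold poissonRatio; positivity

theorem poissonRatio_rpow {x l : ℝ} (hx : 0 ≤ x) (hl : 0 ≤ l) (α : ℝ) (n : ℕ) :
    poissonRatio x l n ^ α = exp (α * (l - x)) * ((x / l) ^ α) ^ n := by
  rw [poissonRatio, mul_rpow (exp_pos _).le (by positivity), ← exp_mul, mul_comm (l - x),
    rpow_pow_comm (div_nonneg hx hl)]

theorem hasSum_poissonMass_rpow_mul_poissonMass_rpow {x l : ℝ} (hx : 0 ≤ x) (hl : 0 < l)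
    (α : ℝ) :
    HasSum (fun n => poissonMass x n ^ α * poissonMass l n ^ (1 - α))
      (exp (α * (l - x) + l * ((x / l) ^ α - 1))) := by
  have hterm (n : ℕ) : poissonMass x n ^ α * poissonMass l n ^ (1 - α) =
      exp (α * (l - x)) * (poissonMass l n * ((x / l) ^ α) ^ n) := by
    have hm := poissonMass_pos hl n
    rw [poissonMass_eq_mul_poissonRatio x hl, mul_rpow hm.le (by unfold poissonRatio; positivity),
      poissonRatio_rpow hx hl.le, mul_right_comm, ← rpow_add hm, add_sub_cancel, rpow_one]
    ring
  rw [exp_add]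
  simpa only [hterm] using
    (hasSum_poissonMass_mul_pow l ((x / l) ^ α)).mul_left (exp (α * (l - x)))

theorem renyiDiv_poissonMeasure {x l : ℝ} (hx : 0 < x) (hl : 0 < l) (α : ℝ) :
    renyiDiv α (poissonMeasure x) (poissonMeasure l) =
      (((α * (α - 1))⁻¹ * (α * (l - x) + l * ((x / l) ^ α - 1)) : ℝ) : EReal) := by
  have hdensity (n : ℕ) : ENNReal.ofReal (poissonRatio x l n) ^ α =
      ENNReal.ofReal (exp (α * (l - x))) * ENNReal.ofReal (((x / l) ^ α) ^ n) := by
    rw [ENNReal.ofReal_rpow_of_pos (poissonRatio_pos hx hl n), poissonRatio_rpow hx.le hl.le,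
      ENNReal.ofReal_mul (exp_pos _).le]
  rw [poissonMeasure_eq_withDensity_poissonRatio x hl, renyiDiv_withDensity _ _ (by fun_prop)]
  simp_rw [hdensity]
  rw [lintegral_const_mul _ (by fun_prop),
    lintegral_ofReal_pow_poissonMeasure hl.le (by positivity),
    ← ENNReal.ofReal_mul (exp_pos _).le, ← exp_add, ENNReal.log_ofReal_of_pos (exp_pos _),
    log_exp, EReal.coe_mul]

end Poisson

theorem renyiDiv_poisson_general (α x : ℝ) (hx : 0 < x) :
    renyiDiv α (poissonMeasure x) (poissonMeasure 1) =
      (((x ^ α - α * x + α - 1) / (α * (α - 1)) : ℝ) : EReal) ∧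
    (α * (α - 1))⁻¹ * Real.log (∑' n : ℕ,
        (x ^ n * Real.exp (-x) / n.factorial) ^ α
          * (Real.exp (-1) / n.factorial) ^ (1 - α))
      = (x ^ α - α * x + α - 1) / (α * (α - 1)) := by
  have hexponent : α * (1 - x) + 1 * ((x / 1) ^ α - 1) = x ^ α - α * x + α - 1 := by
    rw [div_one]; ring
  have hseries := hasSum_poissonMass_rpow_mul_poissonMass_rpow hx.le one_pos α
  rw [hexponent] at hseries
  simp only [poissonMass, one_pow, one_mul] at hseries
  constructor
  · rw [renyiDiv_poissonMeasure hx one_pos, hexponent, inv_mul_eq_div]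
  · rw [hseries.tsum_eq, Real.log_exp, inv_mul_eq_div]

/-- The Rényi divergence of degree `α > 1` of Poisson(`x`) with respect to Poisson(`1`)
equals `k_α(x) = (x^α − αx + α − 1)/(α(α−1))`; equivalently, the explicit series formula
`(1/(α(α−1)))·log ∑ (x^n e^{−x}/n!)^α (e^{−1}/n!)^{1−α} = (x^α − αx + α − 1)/(α(α−1))`. -/
theorem renyiDiv_poisson (α x : ℝ) (hα : 1 < α) (hx : 0 < x) :
    renyiDiv α (poissonMeasure x) (poissonMeasure 1) =
      (((x ^ α - α * x + α - 1) / (α * (α - 1)) : ℝ) : EReal) ∧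
    (α * (α - 1))⁻¹ * Real.log (∑' n : ℕ,
        (x ^ n * Real.exp (-x) / n.factorial) ^ α
          * (Real.exp (-1) / n.factorial) ^ (1 - α))
      = (x ^ α - α * x + α - 1) / (α * (α - 1)) :=
  renyiDiv_poisson_general α x hx
end

section
/- Let (S, 𝓕) be a measurable space, let P be a probability measure on it, let 𝒬 be a nonempty set of probability measures on (S,𝓕), let g : S → ℝ be bounded and measurable, and let β > 0. Define f(α) = sup{ R_α(Q‖P) : Q ∈ 𝒬 } for α > 1. Then sup_{Q ∈ 𝒬} (1/β)·log ∫ e^{β g} dQ ≤ inf_{γ > β} F(β,γ), where F(β,γ) = f(γ/(γ−β))/(γ−β) + (1/γ)·log ∫ e^{γ g} dP (inequality of values in [−∞, +∞]). -/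
open MeasureTheory Classical

/-!
Write `dQ = r dP` with `r = dQ/dP`. Hölder's inequality for the conjugate exponents `γ/β` and
`α = γ/(γ-β)` gives `∫ e^{βg} dQ = ∫ e^{βg} r dP ≤ (∫ e^{γg} dP)^{β/γ} (∫ r^α dP)^{1/α}`.
Taking `β⁻¹ log` of both sides yields `β⁻¹ log ∫ e^{βg} dQ ≤ γ⁻¹ log ∫ e^{γg} dP + R_α(Q‖P)/(γ-β)`,
because `1/(αβ) = (γ-β)⁻¹ · 1/(α(α-1))`. It remains to take the supremum over `Q` and the
infimum over `γ`.
-/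

open scoped ENNReal
open ProbabilityTheory Real

theorem lintegral_le_Lp_mul_Lq_rnDeriv {S : Type*} [MeasurableSpace S] {P Q : Measure S}
    [Q.HaveLebesgueDecomposition P] (hQP : Q ≪ P) {f : S → ℝ≥0∞} (hf : AEMeasurable f P)
    {p q : ℝ} (hpq : p.HolderConjugate q) :
    ∫⁻ x, f x ∂Q ≤ (∫⁻ x, f x ^ p ∂P) ^ (1 / p) * (∫⁻ x, Q.rnDeriv P x ^ q ∂P) ^ (1 / q) := by
  conv_lhs => rw [← Measure.withDensity_rnDeriv_eq Q P hQP]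
  rw [lintegral_withDensity_eq_lintegral_mul₀ (Measure.measurable_rnDeriv Q P).aemeasurable hf,
    show (Q.rnDeriv P * f) = f * Q.rnDeriv P from mul_comm _ _]
  exact ENNReal.lintegral_mul_le_Lp_mul_Lq P hpq hf (Measure.measurable_rnDeriv Q P).aemeasurable

theorem log_lintegral_rpow_le_renyiDiv {S : Type*} [MeasurableSpace S] {P Q : Measure S}
    [Q.HaveLebesgueDecomposition P] (hQP : Q ≪ P) {f : S → ℝ≥0∞} (hf : AEMeasurable f P)
    {β γ : ℝ} (hβ : 0 < β) (hβγ : β < γ) :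
    ((β⁻¹ : ℝ) : EReal) * ENNReal.log (∫⁻ x, f x ^ β ∂Q) ≤
      (((γ - β)⁻¹ : ℝ) : EReal) * renyiDiv (γ / (γ - β)) Q P
        + ((γ⁻¹ : ℝ) : EReal) * ENNReal.log (∫⁻ x, f x ^ γ ∂P) := by
  have hγ : 0 < γ := hβ.trans hβγ
  have hγβ : 0 < γ - β := sub_pos.2 hβγ
  have hpq : (γ / β).HolderConjugate (γ / (γ - β)) := by
    rw [Real.holderConjugate_iff]
    refine ⟨(one_lt_div hβ).2 hβγ, ?_⟩
    field_simp
    ring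
  have holder := lintegral_le_Lp_mul_Lq_rnDeriv hQP (hf.pow_const β) hpq
  simp_rw [← ENNReal.rpow_mul, mul_div_cancel₀ γ hβ.ne'] at holder
  have hroot := ENNReal.rpow_le_rpow holder (inv_nonneg.2 hβ.le)
  rw [ENNReal.mul_rpow_of_nonneg _ _ (inv_nonneg.2 hβ.le), ← ENNReal.rpow_mul,
    ← ENNReal.rpow_mul] at hroot
  have hlog := ENNReal.log_monotone hroot
  rw [ENNReal.log_rpow, ENNReal.log_mul_add, ENNReal.log_rpow, ENNReal.log_rpow] at hlog
  have hcoef_renyi :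
      (γ - β)⁻¹ * ((γ / (γ - β)) * (γ / (γ - β) - 1))⁻¹ = 1 / (γ / (γ - β)) * β⁻¹ := by
    rw [div_sub_one hγβ.ne', sub_sub_cancel]
    field_simp
  have hcoef_P : γ⁻¹ = 1 / (γ / β) * β⁻¹ := by field_simp
  rw [renyiDiv, if_pos hQP, ← mul_assoc, ← EReal.coe_mul, hcoef_renyi, hcoef_P, add_comm]
  exact hlog

theorem log_lintegral_ofReal_exp_mul_eq_cgf {Ω : Type*} [MeasurableSpace Ω] {μ : Measure Ω}
    [NeZero μ] {X : Ω → ℝ} {t : ℝ} (h : Integrable (fun ω ↦ rexp (t * X ω)) μ) :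
    ENNReal.log (∫⁻ ω, ENNReal.ofReal (rexp (t * X ω)) ∂μ) = cgf X μ t := by
  rw [← ofReal_integral_eq_lintegral_ofReal h (ae_of_all _ fun ω ↦ (exp_pos _).le)]
  exact ENNReal.log_ofReal_of_pos (mgf_pos' (NeZero.ne μ) h)

theorem inv_mul_cgf_le_renyiDiv {S : Type*} [MeasurableSpace S] {P Q : Measure S} [NeZero P]
    [NeZero Q] [Q.HaveLebesgueDecomposition P] {g : S → ℝ} (hg : AEMeasurable g P)
    {β γ : ℝ} (hβ : 0 < β) (hβγ : β < γ)
    (hQ : Integrable (fun x ↦ rexp (β * g x)) Q) (hP : Integrable (fun x ↦ rexp (γ * g x)) P) :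
    ((β⁻¹ * cgf g Q β : ℝ) : EReal) ≤
      (((γ - β)⁻¹ : ℝ) : EReal) * renyiDiv (γ / (γ - β)) Q P + ((γ⁻¹ * cgf g P γ : ℝ) : EReal) := by
  by_cases hQP : Q ≪ P
  · have hpow (t : ℝ) (x : S) :
        ENNReal.ofReal (rexp (t * g x)) = ENNReal.ofReal (rexp (g x)) ^ t := by
      rw [ENNReal.ofReal_rpow_of_pos (exp_pos _), ← exp_mul, mul_comm]
    have key := log_lintegral_rpow_le_renyiDiv (f := fun x ↦ ENNReal.ofReal (rexp (g x))) hQP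
      (measurable_exp.comp_aemeasurable hg).ennreal_ofReal hβ hβγ
    simp_rw [← hpow, log_lintegral_ofReal_exp_mul_eq_cgf hQ,
      log_lintegral_ofReal_exp_mul_eq_cgf hP] at key
    simpa only [EReal.coe_mul] using key
  · rw [renyiDiv, if_neg hQP, EReal.coe_mul_top_of_pos (inv_pos.2 (sub_pos.2 hβγ)),
      EReal.top_add_coe]
    exact le_top

theorem robust_risk_sensitive_bound_general {S : Type*} [MeasurableSpace S]
    (P : Measure S) [IsProbabilityMeasure P]
    (𝒬 : Set (Measure S)) (hprob : ∀ Q ∈ 𝒬, IsProbabilityMeasure Q)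
    (g : S → ℝ) (hg : Measurable g) (hbd : ∃ M : ℝ, ∀ x, |g x| ≤ M)
    (β : ℝ) (hβ : 0 < β) :
    (⨆ Q ∈ 𝒬, ((β⁻¹ * Real.log (∫ x, Real.exp (β * g x) ∂Q) : ℝ) : EReal)) ≤
      ⨅ γ ∈ Set.Ioi β,
        (((γ - β)⁻¹ : ℝ) : EReal) * (⨆ Q ∈ 𝒬, renyiDiv (γ / (γ - β)) Q P)
          + ((γ⁻¹ * Real.log (∫ x, Real.exp (γ * g x) ∂P) : ℝ) : EReal) := by
  obtain ⟨M, hM⟩ := hbd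
  have hint (μ : Measure S) [IsFiniteMeasure μ] (t : ℝ) :
      Integrable (fun x ↦ rexp (t * g x)) μ :=
    integrable_exp_mul_of_mem_Icc hg.aemeasurable (ae_of_all _ fun x ↦ abs_le.1 (hM x))
  refine iSup₂_le fun Q hQ ↦ le_iInf₂ fun γ (hγ : β < γ) ↦ ?_
  have := hprob Q hQ
  calc _ ≤ _ := inv_mul_cgf_le_renyiDiv hg.aemeasurable hβ hγ (hint Q β) (hint P γ)
    _ ≤ _ := add_le_add_left (mul_le_mul_of_nonneg_left (le_iSup₂ (f := fun Q (_ : Q ∈ 𝒬) ↦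
        renyiDiv (γ / (γ - β)) Q P) Q hQ) (by exact_mod_cast (inv_pos.2 (sub_pos.2 hγ)).le)) _

/-- Robust risk-sensitive bound: with `f(α) = sup_{Q ∈ 𝒬} R_α(Q‖P)`,
`sup_{Q ∈ 𝒬} (1/β)·log ∫ e^{βg} dQ ≤ inf_{γ > β} [ f(γ/(γ−β))/(γ−β) + (1/γ)·log ∫ e^{γg} dP ]`. -/
theorem robust_risk_sensitive_bound {S : Type*} [MeasurableSpace S]
    (P : Measure S) [IsProbabilityMeasure P]
    (𝒬 : Set (Measure S)) (h𝒬 : 𝒬.Nonempty) (hprob : ∀ Q ∈ 𝒬, IsProbabilityMeasure Q)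
    (g : S → ℝ) (hg : Measurable g) (hbd : ∃ M : ℝ, ∀ x, |g x| ≤ M)
    (β : ℝ) (hβ : 0 < β) :
    (⨆ Q ∈ 𝒬, ((β⁻¹ * Real.log (∫ x, Real.exp (β * g x) ∂Q) : ℝ) : EReal)) ≤
      ⨅ γ ∈ Set.Ioi β,
        (((γ - β)⁻¹ : ℝ) : EReal) * (⨆ Q ∈ 𝒬, renyiDiv (γ / (γ - β)) Q P)
          + ((γ⁻¹ * Real.log (∫ x, Real.exp (γ * g x) ∂P) : ℝ) : EReal) :=
  robust_risk_sensitive_bound_general P 𝒬 hprob g hg hbd β hβ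
end

section
/- Let (S, 𝓕) be a measurable space, let P be a probability measure on it, let 𝒬 be a nonempty set of probability measures on (S,𝓕) each absolutely continuous with respect to P, let g : S → ℝ be bounded and measurable, and let β > 0. Define, for γ > β, h(γ) = f(γ/(γ−β))/(γ−β) + (1/γ)·log ∫ e^{γ g} dP, where f(α) = sup{ R_α(Q‖P) : Q ∈ 𝒬 }. Then the function γ̃ ↦ h(1/γ̃) is convex on the interval (0, 1/β); that is, h(γ) is convex as a function of 1/γ. -/
/-!
With `t = 1/γ` and `s = 1 - βt`, one has `γ/(γ-β) = 1/s`, and the Rényi term becomes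
`(t/s)·R_{1/s}(Q‖P) = β⁻¹ · s log ∫ (dQ/dP)^{1/s} dP`, while the cumulant term becomes
`t log ∫ (e^g)^{1/t} dP`. Both are instances of `s ↦ s log ∫ f^{1/s} = log ‖f‖_{1/s}`, which is
convex by Hölder's inequality (Lyapunov's log-convexity of `L^p` norms in `1/p`); `s` is affine in
`t`, and a supremum of convex functions is convex.
-/

open MeasureTheory Classical

open ProbabilityTheory
open scoped ENNReal

namespace EReal

theorem coe_mul_add_of_nonneg {c : ℝ} (hc : 0 ≤ c) (x y : EReal) :
    (c : EReal) * (x + y) = c * x + c * y :=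
  left_distrib_of_nonneg_of_ne_top (EReal.coe_nonneg.2 hc) (coe_ne_top c) x y

theorem coe_mul_iSup_of_pos {ι : Sort*} {c : ℝ} (hc : 0 < c) (f : ι → EReal) :
    (c : EReal) * ⨆ i, f i = ⨆ i, (c : EReal) * f i := by
  have hc' : (0 : EReal) < c := by exact_mod_cast hc
  refine le_antisymm ?_ (iSup_le fun i => mul_le_mul_of_nonneg_left (le_iSup f i) hc'.le)
  have hle : ⨆ i, f i ≤ (⨆ i, (c : EReal) * f i) / c :=
    iSup_le fun i => (le_div_iff_mul_le hc' (coe_ne_top c)).2 <| by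
      rw [mul_comm]; exact le_iSup (fun i => (c : EReal) * f i) i
  calc (c : EReal) * ⨆ i, f i ≤ c * ((⨆ i, (c : EReal) * f i) / c) :=
        mul_le_mul_of_nonneg_left hle hc'.le
    _ = ⨆ i, (c : EReal) * f i := mul_div_cancel (coe_ne_bot c) (coe_ne_top c) hc'.ne'

theorem biSup_le_mul_add_mul {ι : Type*} {I : Set ι} {φ ψ χ : ι → EReal} {a b : ℝ}
    (ha : 0 ≤ a) (hb : 0 ≤ b) (h : ∀ i ∈ I, φ i ≤ a * ψ i + b * χ i) :
    ⨆ i ∈ I, φ i ≤ a * (⨆ i ∈ I, ψ i) + b * ⨆ i ∈ I, χ i :=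
  iSup₂_le fun i hi => (h i hi).trans <|
    add_le_add
      (mul_le_mul_of_nonneg_left (le_iSup₂ (f := fun i _ => ψ i) i hi) (EReal.coe_nonneg.2 ha))
      (mul_le_mul_of_nonneg_left (le_iSup₂ (f := fun i _ => χ i) i hi) (EReal.coe_nonneg.2 hb))

theorem coe_mul_add_le_mul_add_mul {a b c : ℝ} (ha : 0 ≤ a) (hb : 0 ≤ b) (hc : 0 ≤ c)
    {x x₁ x₂ y y₁ y₂ : EReal} (hx : x ≤ a * x₁ + b * x₂) (hy : y ≤ a * y₁ + b * y₂) :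
    c * x + y ≤ a * (c * x₁ + y₁) + b * (c * x₂ + y₂) :=
  calc c * x + y ≤ c * (a * x₁ + b * x₂) + (a * y₁ + b * y₂) :=
        add_le_add (mul_le_mul_of_nonneg_left hx (EReal.coe_nonneg.2 hc)) hy
    _ = a * (c * x₁ + y₁) + b * (c * x₂ + y₂) := by
        rw [coe_mul_add_of_nonneg hc, coe_mul_add_of_nonneg ha, coe_mul_add_of_nonneg hb,
          mul_left_comm _ (a : EReal), mul_left_comm _ (b : EReal)]
        exact add_add_add_comm _ _ _ _

end EReal

section LogLpNorm

variable {S : Type*} [MeasurableSpace S]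

noncomputable def logLpNormInv (μ : Measure S) (f : S → ℝ≥0∞) (s : ℝ) : EReal :=
  s * ENNReal.log (∫⁻ x, f x ^ s⁻¹ ∂μ)

theorem logLpNormInv_convex_comb_le (μ : Measure S) {f : S → ℝ≥0∞} (hf : AEMeasurable f μ)
    {s₁ s₂ l : ℝ} (hs₁ : 0 < s₁) (hs₂ : 0 < s₂) (hl₀ : 0 ≤ l) (hl₁ : l ≤ 1) :
    logLpNormInv μ f (l * s₁ + (1 - l) * s₂) ≤
      l * logLpNormInv μ f s₁ + ((1 - l : ℝ) : EReal) * logLpNormInv μ f s₂ := by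
  set s := l * s₁ + (1 - l) * s₂ with hs_def
  have hs : 0 < s := convex_Ioi (0 : ℝ) hs₁ hs₂ hl₀ (sub_nonneg.2 hl₁) (by ring)
  have hp : 0 ≤ l * s₁ / s := by positivity
  have hq : 0 ≤ (1 - l) * s₂ / s := div_nonneg (mul_nonneg (by linarith) hs₂.le) hs.le
  have holder := ENNReal.lintegral_mul_norm_pow_le (μ := μ) (hf.pow_const s₁⁻¹)
    (hf.pow_const s₂⁻¹) hp hq (by field_simp; exact hs_def.symm)
  have integrand : ∀ x, (f x ^ s₁⁻¹) ^ (l * s₁ / s) * (f x ^ s₂⁻¹) ^ ((1 - l) * s₂ / s) =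
      f x ^ s⁻¹ := fun x => by
    rw [← ENNReal.rpow_mul, ← ENNReal.rpow_mul, ← ENNReal.rpow_add_of_nonneg _ _
      (mul_nonneg (inv_nonneg.2 hs₁.le) hp) (mul_nonneg (inv_nonneg.2 hs₂.le) hq)]
    congr 1
    field_simp
    ring
  simp_rw [integrand] at holder
  have hlog := ENNReal.log_monotone holder
  rw [ENNReal.log_mul_add, ENNReal.log_rpow, ENNReal.log_rpow] at hlog
  calc logLpNormInv μ f s
      ≤ s * ((l * s₁ / s : ℝ) * ENNReal.log (∫⁻ x, f x ^ s₁⁻¹ ∂μ)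
          + ((1 - l) * s₂ / s : ℝ) * ENNReal.log (∫⁻ x, f x ^ s₂⁻¹ ∂μ)) :=
        mul_le_mul_of_nonneg_left hlog (EReal.coe_nonneg.2 hs.le)
    _ = l * logLpNormInv μ f s₁ + ((1 - l : ℝ) : EReal) * logLpNormInv μ f s₂ := by
        rw [EReal.coe_mul_add_of_nonneg hs.le, logLpNormInv, logLpNormInv, ← mul_assoc,
          ← mul_assoc, ← mul_assoc, ← mul_assoc, ← EReal.coe_mul, ← EReal.coe_mul, ← EReal.coe_mul, ← EReal.coe_mul]
        congr 3 <;> field_simp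

theorem renyiDiv_inv_eq {Q P : Measure S} (hQP : Q ≪ P) (s : ℝ) :
    renyiDiv s⁻¹ Q P = ((s / (1 - s) : ℝ) : EReal) * logLpNormInv P (Q.rnDeriv P) s := by
  rw [renyiDiv, if_pos hQP, logLpNormInv, ← mul_assoc, ← EReal.coe_mul]
  congr 2
  rcases eq_or_ne s 0 with rfl | hs
  · simp
  rw [show s⁻¹ - 1 = (1 - s) / s by field_simp,
    show s⁻¹ * ((1 - s) / s) = (1 - s) / s ^ 2 by ring, inv_div]
  ring

theorem coe_mul_log_integral_exp_eq_logLpNormInv (μ : Measure S) [NeZero μ] {g : S → ℝ}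
    {t : ℝ} (hint : Integrable (fun x => Real.exp (t⁻¹ * g x)) μ) :
    ((t * Real.log (∫ x, Real.exp (t⁻¹ * g x) ∂μ) : ℝ) : EReal) =
      logLpNormInv μ (fun x => ENNReal.ofReal (Real.exp (g x))) t := by
  have integrand : ∀ x, ENNReal.ofReal (Real.exp (g x)) ^ t⁻¹ =
      ENNReal.ofReal (Real.exp (t⁻¹ * g x)) := fun x => by
    rw [ENNReal.ofReal_rpow_of_pos (Real.exp_pos _), ← Real.exp_mul, mul_comm]
  simp_rw [logLpNormInv, integrand, EReal.coe_mul,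
    ← ofReal_integral_eq_lintegral_ofReal hint (ae_of_all _ fun x => (Real.exp_pos _).le),
    ENNReal.log_ofReal_of_pos (integral_exp_pos hint)]

theorem coe_mul_biSup_renyiDiv_eq {P : Measure S}
    {𝒬 : Set (Measure S)} (habs : ∀ Q ∈ 𝒬, Q ≪ P) {β t : ℝ} (hβ : 0 < β) (ht : 0 < t)
    (hs : 0 < 1 - β * t) :
    (((t⁻¹ - β)⁻¹ : ℝ) : EReal) * ⨆ Q ∈ 𝒬, renyiDiv (t⁻¹ / (t⁻¹ - β)) Q P =
      ((β⁻¹ : ℝ) : EReal) * ⨆ Q ∈ 𝒬, logLpNormInv P (Q.rnDeriv P) (1 - β * t) := by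
  have hγ : t⁻¹ - β = (1 - β * t) / t := by field_simp
  have hc : 0 < (1 - β * t) / (1 - (1 - β * t)) := div_pos hs (by rw [sub_sub_cancel]; positivity)
  rw [hγ, div_div_eq_mul_div, inv_mul_cancel₀ ht.ne', one_div,
    iSup_congr fun Q => iSup_congr fun hQ => renyiDiv_inv_eq (habs Q hQ) _]
  simp_rw [← EReal.coe_mul_iSup_of_pos hc]
  rw [← mul_assoc, ← EReal.coe_mul, sub_sub_cancel, inv_div, div_mul_div_cancel₀ hs.ne',
    div_mul_cancel_right₀ ht.ne']

end LogLpNorm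

theorem robust_bound_convex_in_inverse_general {S : Type*} [MeasurableSpace S]
    (P : Measure S) [IsProbabilityMeasure P]
    (𝒬 : Set (Measure S))
    (habs : ∀ Q ∈ 𝒬, Q ≪ P)
    (g : S → ℝ) (hg : Measurable g) (hbd : ∃ M : ℝ, ∀ x, |g x| ≤ M)
    (β : ℝ) (hβ : 0 < β) (h : ℝ → EReal)
    (hdef : ∀ γ : ℝ, h γ =
      (((γ - β)⁻¹ : ℝ) : EReal) * (⨆ Q ∈ 𝒬, renyiDiv (γ / (γ - β)) Q P)
        + ((γ⁻¹ * Real.log (∫ x, Real.exp (γ * g x) ∂P) : ℝ) : EReal)) :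
    ∀ t₁ ∈ Set.Ioo (0 : ℝ) β⁻¹, ∀ t₂ ∈ Set.Ioo (0 : ℝ) β⁻¹, ∀ l ∈ Set.Ioo (0 : ℝ) 1,
      h (l * t₁ + (1 - l) * t₂)⁻¹ ≤
        ((l : ℝ) : EReal) * h t₁⁻¹ + ((1 - l : ℝ) : EReal) * h t₂⁻¹ := by
  obtain ⟨M, hM⟩ := hbd
  set F : ℝ → EReal := fun s => ⨆ Q ∈ 𝒬, logLpNormInv P (Q.rnDeriv P) s
  set G := logLpNormInv P (fun x => ENNReal.ofReal (Real.exp (g x)))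
  have hs : ∀ t ∈ Set.Ioo (0 : ℝ) β⁻¹, 0 < 1 - β * t := fun t ht => by
    nlinarith [ht.2, mul_inv_cancel₀ hβ.ne']
  have hinv : ∀ t ∈ Set.Ioo (0 : ℝ) β⁻¹, h t⁻¹ = ((β⁻¹ : ℝ) : EReal) * F (1 - β * t) + G t :=
    fun t ht => by
      rw [hdef, coe_mul_biSup_renyiDiv_eq habs hβ ht.1 (hs t ht), inv_inv,
        coe_mul_log_integral_exp_eq_logLpNormInv P (integrable_exp_mul_of_mem_Icc
          hg.aemeasurable (ae_of_all _ fun x => abs_le.1 (hM x)))]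
  rintro t₁ ht₁ t₂ ht₂ l ⟨hl₀, hl₁⟩
  have ht : l * t₁ + (1 - l) * t₂ ∈ Set.Ioo 0 β⁻¹ :=
    convex_Ioo 0 β⁻¹ ht₁ ht₂ hl₀.le (by linarith) (by ring)
  have hF : F (1 - β * (l * t₁ + (1 - l) * t₂)) ≤
      l * F (1 - β * t₁) + ((1 - l : ℝ) : EReal) * F (1 - β * t₂) := by
    rw [show 1 - β * (l * t₁ + (1 - l) * t₂) = l * (1 - β * t₁) + (1 - l) * (1 - β * t₂) by ring]
    exact EReal.biSup_le_mul_add_mul hl₀.le (by linarith) fun Q _ =>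
      logLpNormInv_convex_comb_le P (Measure.measurable_rnDeriv Q P).aemeasurable
        (hs t₁ ht₁) (hs t₂ ht₂) hl₀.le hl₁.le
  have hG : G (l * t₁ + (1 - l) * t₂) ≤ l * G t₁ + ((1 - l : ℝ) : EReal) * G t₂ :=
    logLpNormInv_convex_comb_le P hg.exp.ennreal_ofReal.aemeasurable ht₁.1 ht₂.1 hl₀.le hl₁.le
  rw [hinv _ ht₁, hinv _ ht₂, hinv _ ht]
  exact EReal.coe_mul_add_le_mul_add_mul hl₀.le (sub_nonneg.2 hl₁.le) (inv_nonneg.2 hβ.le) hF hG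

/-- Convexity of the robust risk-sensitive bound: the function
`h(γ) = f(γ/(γ−β))/(γ−β) + (1/γ)·log ∫ e^{γg} dP` (with
`f(α) = sup_{Q ∈ 𝒬} R_α(Q‖P)`) is convex as a function of `1/γ` on `(0, 1/β)`. -/
theorem robust_bound_convex_in_inverse {S : Type*} [MeasurableSpace S]
    (P : Measure S) [IsProbabilityMeasure P]
    (𝒬 : Set (Measure S)) (h𝒬 : 𝒬.Nonempty) (hprob : ∀ Q ∈ 𝒬, IsProbabilityMeasure Q)
    (habs : ∀ Q ∈ 𝒬, Q ≪ P)
    (g : S → ℝ) (hg : Measurable g) (hbd : ∃ M : ℝ, ∀ x, |g x| ≤ M)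
    (β : ℝ) (hβ : 0 < β) (h : ℝ → EReal)
    (hdef : ∀ γ : ℝ, h γ =
      (((γ - β)⁻¹ : ℝ) : EReal) * (⨆ Q ∈ 𝒬, renyiDiv (γ / (γ - β)) Q P)
        + ((γ⁻¹ * Real.log (∫ x, Real.exp (γ * g x) ∂P) : ℝ) : EReal)) :
    ∀ t₁ ∈ Set.Ioo (0 : ℝ) β⁻¹, ∀ t₂ ∈ Set.Ioo (0 : ℝ) β⁻¹, ∀ l ∈ Set.Ioo (0 : ℝ) 1,
      h (l * t₁ + (1 - l) * t₂)⁻¹ ≤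
        ((l : ℝ) : EReal) * h t₁⁻¹ + ((1 - l : ℝ) : EReal) * h t₂⁻¹ :=
  robust_bound_convex_in_inverse_general P 𝒬 habs g hg hbd β hβ h hdef
end

section
/- Let 1 < α < α₀, let u ≥ 0, and let μ be a probability measure on [0, ∞) satisfying ∫ x dμ(x) = 1 and ∫ k_{α₀}(x) dμ(x) ≤ u. Then ∫ k_α(x) dμ(x) ≤ (1/(α(α−1)))·[ (α₀(α₀−1)·u + 1)^{(α−1)/(α₀−1)} − 1 ]. -/
open MeasureTheory

/-- `k_β(x) = (x^β − βx + β − 1)/(β(β−1))`. -/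
noncomputable def kRenyi (β x : ℝ) : ℝ := (x ^ β - β * x + β - 1) / (β * (β - 1))

/-!
Since the mean is `1`, `∫ k_β dμ = (∫ x^β dμ - 1) / (β(β-1))`, so the constraint is the moment
bound `∫ x^α₀ dμ ≤ C := α₀(α₀-1)u + 1`. Writing `α = θ α₀ + (1 - θ)·1` with
`θ = (α-1)/(α₀-1)`, Hölder's inequality gives `∫ x^α ≤ (∫ x^α₀)^θ (∫ x)^(1-θ) ≤ C^θ`, which
translates back into the claimed bound on `∫ k_α dμ`.
-/

open scoped ENNReal

theorem ENNReal.lintegral_rpow_le_rpow_mul_rpow {X : Type*} [MeasurableSpace X] {μ : Measure X}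
    {f : X → ℝ≥0∞} (hf : AEMeasurable f μ) {a b θ : ℝ} (ha : 0 ≤ a) (hb : 0 ≤ b)
    (hθ₀ : 0 ≤ θ) (hθ₁ : θ ≤ 1) :
    ∫⁻ x, f x ^ (θ * a + (1 - θ) * b) ∂μ ≤
      (∫⁻ x, f x ^ a ∂μ) ^ θ * (∫⁻ x, f x ^ b ∂μ) ^ (1 - θ) := by
  calc ∫⁻ x, f x ^ (θ * a + (1 - θ) * b) ∂μ
      = ∫⁻ x, (f x ^ a) ^ θ * (f x ^ b) ^ (1 - θ) ∂μ := by
        refine lintegral_congr fun x ↦ ?_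
        rw [← ENNReal.rpow_mul, ← ENNReal.rpow_mul, ← ENNReal.rpow_add_of_nonneg _ _
          (by positivity) (mul_nonneg hb (by linarith)), mul_comm a, mul_comm b]
    _ ≤ _ := ENNReal.lintegral_mul_norm_pow_le (hf.pow_const a) (hf.pow_const b) hθ₀
        (by linarith) (by ring)

theorem kRenyi_nonneg {β x : ℝ} (hβ : 1 < β) (hx : 0 ≤ x) : 0 ≤ kRenyi β x := by
  have bernoulli := one_add_mul_self_le_rpow_one_add (by linarith : (-1 : ℝ) ≤ x - 1) hβ.le
  rw [add_sub_cancel] at bernoulli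
  exact div_nonneg (by linarith) (mul_pos (by linarith) (by linarith)).le

@[fun_prop]
theorem measurable_kRenyi (β : ℝ) : Measurable (kRenyi β) := by
  unfold kRenyi; fun_prop

-- The defining identity with no subtraction left, so that it can be integrated in `ℝ≥0∞`.
theorem mul_kRenyi_add_mul {β : ℝ} (hβ : β * (β - 1) ≠ 0) (x : ℝ) :
    β * (β - 1) * kRenyi β x + β * x = x ^ β + (β - 1) := by
  rw [kRenyi, mul_div_cancel₀ _ hβ]
  ring

theorem lintegral_ofReal_eq_one_of_integral_eq_one {μ : Measure ℝ} (hsupp : ∀ᵐ x ∂μ, 0 ≤ x)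
    (hmean : ∫ x, x ∂μ = 1) : ∫⁻ x, ENNReal.ofReal x ∂μ = 1 := by
  have hint : Integrable (fun x ↦ x) μ := .of_integral_ne_zero (by simp [hmean])
  rw [← ofReal_integral_eq_lintegral_ofReal hint hsupp, hmean, ENNReal.ofReal_one]

section Moments

variable {μ : Measure ℝ} [IsProbabilityMeasure μ] {β : ℝ}

theorem ofReal_mul_lintegral_kRenyi_add (hβ : 1 < β) (hsupp : ∀ᵐ x ∂μ, 0 ≤ x)
    (hmean : ∫⁻ x, ENNReal.ofReal x ∂μ = 1) :
    ENNReal.ofReal (β * (β - 1)) * ∫⁻ x, ENNReal.ofReal (kRenyi β x) ∂μ + ENNReal.ofReal β =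
      ∫⁻ x, ENNReal.ofReal x ^ β ∂μ + ENNReal.ofReal (β - 1) := by
  have hpos : 0 < β * (β - 1) := mul_pos (by linarith) (by linarith)
  have pointwise : ∀ᵐ x ∂μ, ENNReal.ofReal (β * (β - 1)) * ENNReal.ofReal (kRenyi β x) +
      ENNReal.ofReal β * ENNReal.ofReal x = ENNReal.ofReal x ^ β + ENNReal.ofReal (β - 1) := by
    filter_upwards [hsupp] with x hx
    rw [← ENNReal.ofReal_mul hpos.le, ← ENNReal.ofReal_mul (by linarith),
      ← ENNReal.ofReal_add (mul_nonneg hpos.le (kRenyi_nonneg hβ hx)) (by positivity),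
      ENNReal.ofReal_rpow_of_nonneg hx (by linarith),
      ← ENNReal.ofReal_add (by positivity) (by linarith), mul_kRenyi_add_mul hpos.ne']
  have := lintegral_congr_ae pointwise
  rwa [lintegral_add_left (by fun_prop), lintegral_const_mul _ (by fun_prop),
    lintegral_const_mul _ (by fun_prop), hmean, mul_one, lintegral_add_left (by fun_prop),
    lintegral_const, measure_univ, mul_one] at this

theorem lintegral_kRenyi_le_iff (hβ : 1 < β) (hsupp : ∀ᵐ x ∂μ, 0 ≤ x)
    (hmean : ∫⁻ x, ENNReal.ofReal x ∂μ = 1) {t : ℝ} (ht : 1 ≤ t) :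
    ∫⁻ x, ENNReal.ofReal (kRenyi β x) ∂μ ≤ ENNReal.ofReal ((t - 1) / (β * (β - 1))) ↔
      ∫⁻ x, ENNReal.ofReal x ^ β ∂μ ≤ ENNReal.ofReal t := by
  have hpos : 0 < β * (β - 1) := mul_pos (by linarith) (by linarith)
  have hshift : ENNReal.ofReal (t - 1) + ENNReal.ofReal β =
      ENNReal.ofReal t + ENNReal.ofReal (β - 1) := by
    rw [← ENNReal.ofReal_add (by linarith) (by linarith),
      ← ENNReal.ofReal_add (by linarith) (by linarith)]
    ring_nf
  rw [ENNReal.ofReal_div_of_pos hpos, ENNReal.le_div_iff_mul_le (by simp [hpos]) (by simp),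
    mul_comm, ← ENNReal.add_le_add_iff_right ENNReal.ofReal_ne_top (a := ENNReal.ofReal β),
    ofReal_mul_lintegral_kRenyi_add hβ hsupp hmean, hshift,
    ENNReal.add_le_add_iff_right ENNReal.ofReal_ne_top]

end Moments

/-- If `μ` is a probability measure on `[0,∞)` with mean `1` and `∫ k_{α₀} dμ ≤ u`, then
for `1 < α < α₀`, `∫ k_α dμ ≤ (1/(α(α−1)))·[(α₀(α₀−1)u + 1)^{(α−1)/(α₀−1)} − 1]`. -/
theorem integral_kRenyi_le_of_constraint (α α₀ u : ℝ) (hα : 1 < α) (hαα : α < α₀)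
    (hu : 0 ≤ u) (μ : Measure ℝ) [IsProbabilityMeasure μ]
    (hsupp : ∀ᵐ x ∂μ, 0 ≤ x) (hmean : ∫ x, x ∂μ = 1)
    (hconstr : ∫⁻ x, ENNReal.ofReal (kRenyi α₀ x) ∂μ ≤ ENNReal.ofReal u) :
    ∫⁻ x, ENNReal.ofReal (kRenyi α x) ∂μ ≤
      ENNReal.ofReal ((α * (α - 1))⁻¹
        * ((α₀ * (α₀ - 1) * u + 1) ^ ((α - 1) / (α₀ - 1)) - 1)) := by
  have hα₀ : 1 < α₀ := hα.trans hαα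
  have hα₀' : α₀ - 1 ≠ 0 := by linarith
  have hmean' := lintegral_ofReal_eq_one_of_integral_eq_one hsupp hmean
  set C := α₀ * (α₀ - 1) * u + 1
  set θ := (α - 1) / (α₀ - 1)
  have hC : 1 ≤ C := by
    have : 0 ≤ α₀ * (α₀ - 1) * u := mul_nonneg (mul_nonneg (by linarith) (by linarith)) hu
    linarith
  have hθ₀ : 0 ≤ θ := div_nonneg (by linarith) (by linarith)
  have hθ₁ : θ ≤ 1 := (div_le_one (by linarith)).2 (by linarith)
  have hexp : θ * α₀ + (1 - θ) * 1 = α := by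
    simp only [θ]; field_simp; ring
  have moment₀ : ∫⁻ x, ENNReal.ofReal x ^ α₀ ∂μ ≤ ENNReal.ofReal C := by
    refine (lintegral_kRenyi_le_iff hα₀ hsupp hmean' hC).1 ?_
    rwa [show (C - 1) / (α₀ * (α₀ - 1)) = u by simp only [C]; field_simp; ring]
  have moment : ∫⁻ x, ENNReal.ofReal x ^ α ∂μ ≤ ENNReal.ofReal (C ^ θ) := by
    calc ∫⁻ x, ENNReal.ofReal x ^ α ∂μ
        ≤ (∫⁻ x, ENNReal.ofReal x ^ α₀ ∂μ) ^ θ *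
            (∫⁻ x, ENNReal.ofReal x ^ (1 : ℝ) ∂μ) ^ (1 - θ) := by
          rw [← hexp]
          exact ENNReal.lintegral_rpow_le_rpow_mul_rpow (by fun_prop) (by linarith) zero_le_one
            hθ₀ hθ₁
      _ ≤ ENNReal.ofReal (C ^ θ) := by
          rw [← ENNReal.ofReal_rpow_of_nonneg (by linarith) hθ₀]
          simp only [ENNReal.rpow_one, hmean', ENNReal.one_rpow, mul_one]
          gcongr
  rw [inv_mul_eq_div]
  exact (lintegral_kRenyi_le_iff hα hsupp hmean' (Real.one_le_rpow hC hθ₀)).2 moment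
end

section
/- Let 1 < α < α₀ and u ≥ 0. Set ᾱ₀ = α₀(α₀−1), q = (ᾱ₀·u + 1)^{−1/(α₀−1)}, p = 1 − q, and c = (ᾱ₀·u + 1)^{1/(α₀−1)}. Then 0 ≤ q ≤ 1, and the probability measure μ = p·δ₀ + q·δ_c on [0, ∞) satisfies ∫ x dμ(x) = 1, ∫ k_{α₀}(x) dμ(x) = u, and ∫ k_α(x) dμ(x) = (1/(α(α−1)))·[ (ᾱ₀·u + 1)^{(α−1)/(α₀−1)} − 1 ]. -/
open MeasureTheory

lemma integrable_dirac' (f : ℝ → ℝ) (a : ℝ) : Integrable f (Measure.dirac a) := by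
  apply (integrable_const (f a)).congr
  rw [ae_dirac_eq]
  exact Filter.eventually_pure.mpr rfl

lemma integral_two_point (a b c : ℝ) (f : ℝ → ℝ) :
    ∫ x, f x ∂(ENNReal.ofReal a • Measure.dirac (0 : ℝ) + ENNReal.ofReal b • Measure.dirac c)
      = a.toNNReal * f 0 + b.toNNReal * f c := by
  rw [integral_add_measure
      ((integrable_dirac' f 0).smul_measure ENNReal.ofReal_ne_top)
      ((integrable_dirac' f c).smul_measure ENNReal.ofReal_ne_top),
    integral_smul_measure, integral_smul_measure, integral_dirac, integral_dirac]
  simp [ENNReal.toReal_ofReal_eq_iff, Real.toNNReal]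
  rfl

/-- For `1 < α < α₀` and `u ≥ 0`, with `ᾱ₀ = α₀(α₀−1)`, `q = (ᾱ₀u+1)^{−1/(α₀−1)}`,
`p = 1 − q`, `c = (ᾱ₀u+1)^{1/(α₀−1)}`, one has `0 ≤ q ≤ 1`, and the two-point measure
`μ = p·δ₀ + q·δ_c` has mean `1`, satisfies `∫ k_{α₀} dμ = u`, and
`∫ k_α dμ = (1/(α(α−1)))·[(ᾱ₀u+1)^{(α−1)/(α₀−1)} − 1]`. -/
theorem two_point_measure_extremal (α α₀ u q c : ℝ) (hα : 1 < α) (hαα : α < α₀)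
    (hu : 0 ≤ u)
    (hq : q = (α₀ * (α₀ - 1) * u + 1) ^ (-(α₀ - 1)⁻¹))
    (hc : c = (α₀ * (α₀ - 1) * u + 1) ^ ((α₀ - 1)⁻¹))
    (μ : Measure ℝ)
    (hμ : μ = ENNReal.ofReal (1 - q) • Measure.dirac (0 : ℝ)
            + ENNReal.ofReal q • Measure.dirac c) :
    0 ≤ q ∧ q ≤ 1 ∧
    IsProbabilityMeasure μ ∧
    (∫ x, x ∂μ) = 1 ∧
    (∫ x, kRenyi α₀ x ∂μ) = u ∧
    (∫ x, kRenyi α x ∂μ) =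
      (α * (α - 1))⁻¹ * ((α₀ * (α₀ - 1) * u + 1) ^ ((α - 1) / (α₀ - 1)) - 1) := by
  set A : ℝ := α₀ * (α₀ - 1) * u + 1 with hA
  have hα₀1 : 1 < α₀ := hα.trans hαα
  have hα₀ne : α₀ - 1 ≠ 0 := by linarith
  have hαne : α - 1 ≠ 0 := by linarith
  have hA1 : 1 ≤ A := by
    nlinarith [mul_nonneg (mul_nonneg (by linarith : (0:ℝ) ≤ α₀) (by linarith : (0:ℝ) ≤ α₀ - 1)) hu]
  have hApos : 0 < A := by linarith
  have hq0 : 0 ≤ q := hq ▸ Real.rpow_nonneg hApos.le _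
  have hq1 : q ≤ 1 := by
    rw [hq]
    exact Real.rpow_le_one_of_one_le_of_nonpos hA1 (neg_nonpos.mpr (inv_nonneg.mpr (by linarith)))
  -- key multiplicative identities
  have hqc : q * c = 1 := by
    rw [hq, hc, ← Real.rpow_add hApos]
    simp
  have hqcα₀ : q * c ^ α₀ = A := by
    rw [hq, hc, ← Real.rpow_mul hApos.le, ← Real.rpow_add hApos,
      show -(α₀ - 1)⁻¹ + (α₀ - 1)⁻¹ * α₀ = 1 by field_simp; ring, Real.rpow_one]
  have hqcα : q * c ^ α = A ^ ((α - 1) / (α₀ - 1)) := by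
    rw [hq, hc, ← Real.rpow_mul hApos.le, ← Real.rpow_add hApos]
    congr 1
    field_simp
    ring
  have hint : ∀ f : ℝ → ℝ, (∫ x, f x ∂μ) = (1 - q) * f 0 + q * f c := by
    intro f
    rw [hμ, integral_two_point]
    rw [Real.coe_toNNReal _ (by linarith), Real.coe_toNNReal _ hq0]
  have hprob : IsProbabilityMeasure μ := by
    constructor
    rw [hμ]
    simp [Measure.add_apply, ← ENNReal.ofReal_add (by linarith : (0:ℝ) ≤ 1 - q) hq0]
  have h0α₀ : (0 : ℝ) ^ α₀ = 0 := Real.zero_rpow (by positivity)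
  have h0α : (0 : ℝ) ^ α = 0 := Real.zero_rpow (by positivity)
  refine ⟨hq0, hq1, hprob, ?_, ?_, ?_⟩
  · rw [hint]; linarith [hqc]
  · rw [hint]
    simp only [kRenyi, h0α₀]
    have hD : α₀ * (α₀ - 1) ≠ 0 := by positivity
    field_simp
    linear_combination hqcα₀ - α₀ * hqc
  · rw [hint]
    simp only [kRenyi, h0α]
    have hD : α * (α - 1) ≠ 0 := by positivity
    field_simp
    linear_combination hqcα - α * hqc
end

section
/- Let ρ > 0 and let g(x) = ρ e^{−ρx} be the Exponential(ρ) density on [0,∞), so that H(x) = x + log g(x) = log ρ − (ρ−1)x. With β(λ₁,λ₂) = log ∫₀^∞ e^{λ₁ y + λ₂ H(y)} e^{−y} dy, β*(x₁,x₂) = sup_{(λ₁,λ₂) ∈ ℝ²} [λ₁x₁ + λ₂x₂ − β(λ₁,λ₂)], and G_α^{(2)}(θ) = θ · sup{ α x₂ − β*(x₁,x₂) : (x₁,x₂) ∈ ℝ², x₁ ≤ 1/θ } for θ > 0, one has, for every α > 1, sup_{θ ∈ (0,∞)} G_α^{(2)}(θ) = ρ^α − 1 − α(ρ−1). -/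
open MeasureTheory

/-- The log-moment generating function `β(λ₁,λ₂) = log ∫₀^∞ e^{λ₁y + λ₂H(y)} e^{−y} dy`,
where `H : [0,∞) → ℝ ∪ {−∞}` is encoded through `eH = exp ∘ H : ℝ → [0,∞)` (so
`eH y = 0` exactly when `H(y) = −∞`; the `ℝ≥0∞`-power convention `0^{λ₂} = 0` for
`λ₂ > 0`, `= ∞` for `λ₂ < 0`, realizes the convention `e^{λ₂·(−∞)} = 0` for `λ₂ > 0`). -/
noncomputable def betaFn (eH : ℝ → ENNReal) (l : ℝ × ℝ) : EReal :=
  ENNReal.log (∫⁻ y in Set.Ioi (0 : ℝ),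
    ENNReal.ofReal (Real.exp (l.1 * y)) * eH y ^ l.2 * ENNReal.ofReal (Real.exp (-y)))

/-- The Legendre–Fenchel transform `β*(x) = sup_λ [⟨λ,x⟩ − β(λ)]`. -/
noncomputable def betaStar (eH : ℝ → ENNReal) (x : ℝ × ℝ) : EReal :=
  ⨆ l : ℝ × ℝ, ((l.1 * x.1 + l.2 * x.2 : ℝ) : EReal) - betaFn eH l

/-- `G_α^{(2)}(θ) = θ · sup{ αx₂ − β*(x) : x₁ ≤ 1/θ }`. -/
noncomputable def G2 (eH : ℝ → ENNReal) (α θ : ℝ) : EReal :=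
  ((θ : ℝ) : EReal) *
    ⨆ x : {p : ℝ × ℝ // p.1 ≤ θ⁻¹}, ((α * (x : ℝ × ℝ).2 : ℝ) : EReal) - betaStar eH x

/-! Write `c(λ) = 1 − λ₁ + λ₂(ρ−1)`; then `β(λ) = λ₂ log ρ − log c(λ)` when `c(λ) > 0` and
`β = ∞` otherwise. The tilt `λ = (1 + α(ρ−1) − ρ^α, α)` has `β(λ) = 0`, which bounds
`α x₂ − β*(x)` by `C x₁ ≤ C/θ` with `C = ρ^α − 1 − α(ρ−1) ≥ 0` (Bernoulli), so `G(θ) ≤ C`.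
Conversely, at a point `x` on the line `x₂ = log ρ − (ρ−1)x₁` the inequality
`log t ≤ t − 1` gives `β*(x) ≤ x₁ − 1 − log x₁`, and `θ = ρ^α`, `x₁ = 1/θ` attains `C`. -/

open Set

section G2

variable {eH : ℝ → ENNReal} {α θ : ℝ}

lemma coe_mul_sub_betaStar_le_G2 (hθ : 0 ≤ θ) {x : ℝ × ℝ} (hx : x.1 ≤ θ⁻¹) :
    (θ : EReal) * (((α * x.2 : ℝ) : EReal) - betaStar eH x) ≤ G2 eH α θ :=
  mul_le_mul_of_nonneg_left
    (le_iSup (fun y : {p : ℝ × ℝ // p.1 ≤ θ⁻¹} => ((α * y.1.2 : ℝ) : EReal) - betaStar eH y)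
      ⟨x, hx⟩)
    (EReal.coe_nonneg.2 hθ)

lemma G2_le_of_betaFn_nonpos {C : ℝ} (hC : 0 ≤ C) (hθ : 0 < θ)
    (hβ : betaFn eH (-C, α) ≤ 0) : G2 eH α θ ≤ C := by
  have hsup : (⨆ x : {p : ℝ × ℝ // p.1 ≤ θ⁻¹}, ((α * x.1.2 : ℝ) : EReal) - betaStar eH x)
      ≤ ((C * θ⁻¹ : ℝ) : EReal) := by
    refine iSup_le fun ⟨x, hx⟩ => ?_
    have hstar : ((-C * x.1 + α * x.2 : ℝ) : EReal) ≤ betaStar eH x :=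
      calc ((-C * x.1 + α * x.2 : ℝ) : EReal)
          = ((-C * x.1 + α * x.2 : ℝ) : EReal) - 0 := (sub_zero _).symm
        _ ≤ ((-C * x.1 + α * x.2 : ℝ) : EReal) - betaFn eH (-C, α) := EReal.sub_le_sub le_rfl hβ
        _ ≤ betaStar eH x :=
          le_iSup (fun l : ℝ × ℝ => ((l.1 * x.1 + l.2 * x.2 : ℝ) : EReal) - betaFn eH l) (-C, α)
    calc ((α * x.2 : ℝ) : EReal) - betaStar eH x
        ≤ ((α * x.2 : ℝ) : EReal) - ((-C * x.1 + α * x.2 : ℝ) : EReal) :=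
          EReal.sub_le_sub le_rfl hstar
      _ = ((C * x.1 : ℝ) : EReal) := by rw [← EReal.coe_sub]; ring_nf
      _ ≤ ((C * θ⁻¹ : ℝ) : EReal) := EReal.coe_le_coe_iff.2 (mul_le_mul_of_nonneg_left hx hC)
  calc G2 eH α θ ≤ (θ : EReal) * ((C * θ⁻¹ : ℝ) : EReal) :=
        mul_le_mul_of_nonneg_left hsup (EReal.coe_nonneg.2 hθ.le)
    _ = C := by rw [← EReal.coe_mul, mul_left_comm, mul_inv_cancel₀ hθ.ne', mul_one]

end G2

lemma lintegral_Ioi_exp_neg_mul {c : ℝ} (hc : 0 < c) :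
    ∫⁻ y in Ioi (0 : ℝ), ENNReal.ofReal (Real.exp (-(c * y))) = ENNReal.ofReal c⁻¹ := by
  have hint : IntegrableOn (fun y : ℝ => Real.exp (-c * y)) (Ioi 0) := by
    simpa [neg_mul] using exp_neg_integrableOn_Ioi 0 hc
  simp_rw [← neg_mul]
  rw [← ofReal_integral_eq_lintegral_ofReal hint
      (Filter.Eventually.of_forall fun y => by positivity),
    integral_exp_mul_Ioi (neg_lt_zero.2 hc)]
  simp

lemma lintegral_Ioi_exp_neg_mul_of_nonpos {c : ℝ} (hc : c ≤ 0) :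
    ∫⁻ y in Ioi (0 : ℝ), ENNReal.ofReal (Real.exp (-(c * y))) = ⊤ := by
  refine eq_top_iff.2 ?_
  calc (⊤ : ENNReal) = ∫⁻ _ in Ioi (0 : ℝ), 1 := by simp
    _ ≤ _ := setLIntegral_mono (by fun_prop) fun y (hy : 0 < y) =>
        ENNReal.one_le_ofReal.2 (Real.one_le_exp (by nlinarith))

/-- `exp ∘ H` for the Exponential(`ρ`) density: `H(x) = x + log (ρ e^{−ρx}) = log ρ − (ρ−1)x`. -/
noncomputable def expDensityEH (ρ : ℝ) (x : ℝ) : ENNReal :=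
  ENNReal.ofReal (ρ * Real.exp (-(ρ - 1) * x))

section Exponential

variable {ρ : ℝ}

lemma expDensityEH_integrand (hρ : 0 < ρ) (l : ℝ × ℝ) (y : ℝ) :
    ENNReal.ofReal (Real.exp (l.1 * y)) * expDensityEH ρ y ^ l.2 * ENNReal.ofReal (Real.exp (-y))
      = ENNReal.ofReal (ρ ^ l.2) *
          ENNReal.ofReal (Real.exp (-((1 - l.1 + l.2 * (ρ - 1)) * y))) := by
  rw [expDensityEH, ENNReal.ofReal_rpow_of_pos (by positivity),
    ← ENNReal.ofReal_mul (by positivity), ← ENNReal.ofReal_mul (by positivity),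
    ← ENNReal.ofReal_mul (by positivity),
    Real.mul_rpow hρ.le (Real.exp_nonneg _), ← Real.exp_mul]
  congr 1
  rw [mul_comm (Real.exp _), mul_assoc, mul_assoc, ← Real.exp_add, ← Real.exp_add]
  ring_nf

lemma betaFn_expDensityEH_of_pos (hρ : 0 < ρ) {l : ℝ × ℝ} (hc : 0 < 1 - l.1 + l.2 * (ρ - 1)) :
    betaFn (expDensityEH ρ) l
      = ((l.2 * Real.log ρ - Real.log (1 - l.1 + l.2 * (ρ - 1)) : ℝ) : EReal) := by
  rw [betaFn]
  simp_rw [expDensityEH_integrand hρ]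
  rw [lintegral_const_mul _ (by fun_prop), lintegral_Ioi_exp_neg_mul hc,
    ← ENNReal.ofReal_mul (by positivity),
    ENNReal.log_ofReal_of_pos (by positivity), Real.log_mul (by positivity) (by positivity),
    Real.log_rpow hρ, Real.log_inv, ← sub_eq_add_neg]

lemma betaFn_expDensityEH_of_nonpos (hρ : 0 < ρ) {l : ℝ × ℝ} (hc : 1 - l.1 + l.2 * (ρ - 1) ≤ 0) :
    betaFn (expDensityEH ρ) l = ⊤ := by
  rw [betaFn]
  simp_rw [expDensityEH_integrand hρ]
  rw [lintegral_const_mul _ (by fun_prop), lintegral_Ioi_exp_neg_mul_of_nonpos hc,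
    ENNReal.mul_top (by simp [Real.rpow_pos_of_pos hρ]), ENNReal.log_top]

lemma betaFn_expDensityEH_eq_zero (hρ : 0 < ρ) (α : ℝ) :
    betaFn (expDensityEH ρ) (-(ρ ^ α - 1 - α * (ρ - 1)), α) = 0 := by
  have hc : 1 - -(ρ ^ α - 1 - α * (ρ - 1)) + α * (ρ - 1) = ρ ^ α := by ring
  rw [betaFn_expDensityEH_of_pos hρ (by simpa only [hc] using Real.rpow_pos_of_pos hρ α)]
  simp only [hc, Real.log_rpow hρ, sub_self, EReal.coe_zero]

lemma betaStar_expDensityEH_le (hρ : 0 < ρ) {x₁ : ℝ} (hx : 0 < x₁) :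
    betaStar (expDensityEH ρ) (x₁, Real.log ρ - (ρ - 1) * x₁)
      ≤ ((x₁ - 1 - Real.log x₁ : ℝ) : EReal) := by
  refine iSup_le fun l => ?_
  rcases le_or_gt (1 - l.1 + l.2 * (ρ - 1)) 0 with hc | hc
  · simp [betaFn_expDensityEH_of_nonpos hρ hc]
  · rw [betaFn_expDensityEH_of_pos hρ hc, ← EReal.coe_sub, EReal.coe_le_coe_iff]
    have h := Real.log_le_sub_one_of_pos (mul_pos hc hx)
    rw [Real.log_mul hc.ne' hx.ne'] at h
    nlinarith

lemma le_G2_expDensityEH_rpow (hρ : 0 < ρ) (α : ℝ) :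
    ((ρ ^ α - 1 - α * (ρ - 1) : ℝ) : EReal) ≤ G2 (expDensityEH ρ) α (ρ ^ α) := by
  set θ := ρ ^ α
  have hθ : 0 < θ := Real.rpow_pos_of_pos hρ α
  have hlog : Real.log θ⁻¹ = -(α * Real.log ρ) := by rw [Real.log_inv, Real.log_rpow hρ]
  calc ((θ - 1 - α * (ρ - 1) : ℝ) : EReal)
      = (θ : EReal) *
          ((α * (Real.log ρ - (ρ - 1) * θ⁻¹) - (θ⁻¹ - 1 - Real.log θ⁻¹) : ℝ) : EReal) := by
        rw [← EReal.coe_mul, hlog]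
        congr 1
        field_simp
        ring
    _ ≤ (θ : EReal) * (((α * (Real.log ρ - (ρ - 1) * θ⁻¹) : ℝ) : EReal)
          - betaStar (expDensityEH ρ) (θ⁻¹, Real.log ρ - (ρ - 1) * θ⁻¹)) := by
        rw [EReal.coe_sub]
        exact mul_le_mul_of_nonneg_left (EReal.sub_le_sub le_rfl
          (betaStar_expDensityEH_le hρ (inv_pos.2 hθ))) (EReal.coe_nonneg.2 hθ.le)
    _ ≤ G2 (expDensityEH ρ) α θ := coe_mul_sub_betaStar_le_G2 hθ.le le_rfl

end Exponential

/-- For the Exponential(`ρ`) density `g(x) = ρe^{−ρx}`, with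
`H(x) = x + log g(x) = log ρ − (ρ−1)x` (so `eH x = ρ e^{−(ρ−1)x}`), one has
`sup_{θ > 0} G_α^{(2)}(θ) = ρ^α − 1 − α(ρ−1)` for every `α > 1`. -/
theorem iSup_G2_exponential (ρ : ℝ) (hρ : 0 < ρ) (α : ℝ) (hα : 1 < α) :
    (⨆ θ ∈ Set.Ioi (0 : ℝ),
        G2 (fun x => ENNReal.ofReal (ρ * Real.exp (-(ρ - 1) * x))) α θ)
      = ((ρ ^ α - 1 - α * (ρ - 1) : ℝ) : EReal) := by
  have hC : 0 ≤ ρ ^ α - 1 - α * (ρ - 1) := by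
    have := one_add_mul_self_le_rpow_one_add (s := ρ - 1) (by linarith) hα.le
    simp only [add_sub_cancel] at this
    linarith
  refine le_antisymm (iSup₂_le fun θ hθ => ?_) ?_
  · exact G2_le_of_betaFn_nonpos hC hθ (betaFn_expDensityEH_eq_zero hρ α).le
  · exact (le_G2_expDensityEH_rpow hρ α).trans
      (le_biSup (G2 (expDensityEH ρ) α) (Real.rpow_pos_of_pos hρ α))
end

section
/- Let k ≥ 1, ρ > 1, and α > 1. Let g(x) = (ρ^k/Γ(k))·x^{k−1} e^{−ρx} be the Gamma(k,ρ) density on (0,∞), and let H(x) = x + log g(x) (with H(x) = −∞ where g(x) = 0). Define β(λ₁,λ₂) = log ∫₀^∞ e^{λ₁ y + λ₂ H(y)} e^{−y} dy, β*(x₁,x₂) = sup_{(λ₁,λ₂) ∈ ℝ²} [λ₁x₁ + λ₂x₂ − β(λ₁,λ₂)], and G_α^{(2)}(θ) = θ · sup{ α x₂ − β*(x₁,x₂) : (x₁,x₂) ∈ ℝ², x₁ ≤ 1/θ } for θ > 0. Then sup_{θ ∈ (0,∞)} G_α^{(2)}(θ) ≤ ( Γ(1 + α(k−1)) / Γ(k)^α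 · ρ^{αk} )^{1/(1 + α(k−1))} − α(ρ−1) − 1. -/
open MeasureTheory

/-!
Testing the Legendre transform `β*` at the single slope `λ = (l, α)` with `l ≤ 0` gives
`G_α^{(2)}(θ) ≤ θ β(l, α) - l`. For the Gamma density, `β(l, α)` is an explicit Gamma
integral: with `m = 1 + α(k-1)`, `s₀ = 1 + α(ρ-1)` and `c = (Γ(m) ρ^{αk} / Γ(k)^α)^{1/m}`
it equals `m log (c / (s₀ - l))`. Choosing `s₀ - l = max (θ m) s₀` and using
`log x ≤ x - 1` bounds `θ β(l, α) - l` by `c - s₀`, provided `s₀ ≤ c`. That last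
inequality is Jensen's inequality `(∫ e^H dν)^α ≤ ∫ e^{αH} dν` for the standard
exponential law `ν`, since `∫ e^H dν = 1`.
-/

open Set Real

theorem lintegral_rpow_mul_exp_neg_mul_Ioi {a r : ℝ} (ha : 0 < a) (hr : 0 < r) :
    ∫⁻ t in Ioi 0, ENNReal.ofReal (t ^ (a - 1) * exp (-(r * t)))
      = ENNReal.ofReal ((1 / r) ^ a * Gamma a) := by
  have hint : IntegrableOn (fun t : ℝ => t ^ (a - 1) * exp (-(r * t))) (Ioi 0) := by
    simpa [rpow_one] using integrableOn_rpow_mul_exp_neg_mul_rpow (by linarith) one_pos hr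
  rw [← ofReal_integral_eq_lintegral_ofReal hint, integral_rpow_mul_exp_neg_mul_Ioi ha hr]
  filter_upwards [ae_restrict_mem measurableSet_Ioi] with t (ht : 0 < t)
  positivity

theorem lintegral_mul_rpow_le_of_lintegral_eq_one {X : Type*} [MeasurableSpace X]
    {μ : Measure X} {w f : X → ENNReal} (hw : Measurable w) (hf : Measurable f)
    (hw₁ : ∫⁻ x, w x ∂μ = 1) {p : ℝ} (hp : 1 ≤ p) :
    (∫⁻ x, f x * w x ∂μ) ^ p ≤ ∫⁻ x, f x ^ p * w x ∂μ := by
  have : IsProbabilityMeasure (μ.withDensity w) :=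
    ⟨by rwa [withDensity_apply _ .univ, Measure.restrict_univ]⟩
  have h := eLpNorm'_le_eLpNorm'_of_exponent_le one_pos hp (μ.withDensity w)
    hf.aestronglyMeasurable
  simp only [eLpNorm', enorm_eq_self, ENNReal.rpow_one, div_one,
    lintegral_withDensity_eq_lintegral_mul _ hw hf,
    lintegral_withDensity_eq_lintegral_mul _ hw (hf.pow_const p)] at h
  calc (∫⁻ x, f x * w x ∂μ) ^ p ≤ ((∫⁻ x, f x ^ p * w x ∂μ) ^ (1 / p)) ^ p := by
        gcongr
        simpa only [Pi.mul_apply, mul_comm] using h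
    _ = ∫⁻ x, f x ^ p * w x ∂μ := by
        rw [← ENNReal.rpow_mul, one_div_mul_cancel (by positivity), ENNReal.rpow_one]

theorem mul_log_div_max_add_max_le {u s₀ c : ℝ} (hs₀ : 0 < s₀) (hc : s₀ ≤ c) :
    u * log (c / max u s₀) + max u s₀ ≤ c := by
  set s := max u s₀
  have hs : 0 < s := hs₀.trans_le (le_max_right _ _)
  have hus : u * log (c / s) ≤ s * log (c / s) := by
    rcases le_total u s₀ with h | h
    · have hss₀ : s = s₀ := max_eq_right h
      refine mul_le_mul_of_nonneg_right (le_max_left _ _) (log_nonneg ?_)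
      rwa [hss₀, le_div_iff₀ hs₀, one_mul]
    · rw [show s = u from max_eq_left h]
  have hlog : s * log (c / s) ≤ c - s := by
    have hc₀ : 0 < c := hs₀.trans_le hc
    calc s * log (c / s) ≤ s * (c / s - 1) :=
          mul_le_mul_of_nonneg_left (log_le_sub_one_of_pos (by positivity)) hs.le
      _ = c - s := by field_simp
  linarith

theorem G2_le_of_betaFn_eq {eH : ℝ → ENNReal} {α θ l b : ℝ} (hθ : 0 < θ) (hl : l ≤ 0)
    (hb : betaFn eH (l, α) = b) : G2 eH α θ ≤ ((θ * b - l : ℝ) : EReal) := by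
  have hx : ∀ x : {p : ℝ × ℝ // p.1 ≤ θ⁻¹},
      ((α * (x : ℝ × ℝ).2 : ℝ) : EReal) - betaStar eH x
        ≤ ((b - l * θ⁻¹ : ℝ) : EReal) := by
    rintro ⟨⟨x₁, x₂⟩, hx₁ : x₁ ≤ θ⁻¹⟩
    have hstar : ((l * x₁ + α * x₂ : ℝ) : EReal) - b ≤ betaStar eH (x₁, x₂) :=
      hb ▸ le_iSup
        (fun l' : ℝ × ℝ => ((l'.1 * x₁ + l'.2 * x₂ : ℝ) : EReal) - betaFn eH l') (l, α)
    calc ((α * x₂ : ℝ) : EReal) - betaStar eH (x₁, x₂)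
        ≤ ((α * x₂ : ℝ) : EReal) - (((l * x₁ + α * x₂ : ℝ) : EReal) - b) :=
          EReal.sub_le_sub le_rfl hstar
      _ = ((b - l * x₁ : ℝ) : EReal) := by norm_cast; ring_nf
      _ ≤ ((b - l * θ⁻¹ : ℝ) : EReal) :=
          EReal.coe_le_coe_iff.2 (by linarith [mul_le_mul_of_nonpos_left hx₁ hl])
  calc G2 eH α θ ≤ ((θ : ℝ) : EReal) * ((b - l * θ⁻¹ : ℝ) : EReal) :=
        mul_le_mul_of_nonneg_left (iSup_le hx) (by exact_mod_cast hθ.le)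
    _ = ((θ * b - l : ℝ) : EReal) := by
        rw [← EReal.coe_mul]
        congr 1
        field_simp

/-- `e^{H} = g(x) e^{x}`: the density of Gamma(`k`, `ρ`) with respect to the standard
exponential law. -/
noncomputable def gammaDensityRatio (k ρ : ℝ) (x : ℝ) : ENNReal :=
  ENNReal.ofReal (ρ ^ k / Gamma k * x ^ (k - 1) * exp (-(ρ - 1) * x))

theorem lintegral_exp_mul_gammaDensityRatio_rpow {k ρ α l : ℝ} (hk : 0 < k) (hρ : 0 < ρ)
    (hm : 0 < 1 + α * (k - 1)) (hl : l < 1 + α * (ρ - 1)) :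
    ∫⁻ y in Ioi 0, ENNReal.ofReal (exp (l * y)) * gammaDensityRatio k ρ y ^ α *
        ENNReal.ofReal (exp (-y))
      = ENNReal.ofReal (Gamma (1 + α * (k - 1)) / Gamma k ^ α * ρ ^ (α * k)
          / (1 + α * (ρ - 1) - l) ^ (1 + α * (k - 1))) := by
  set s := 1 + α * (ρ - 1) - l
  have hs : 0 < s := sub_pos.2 hl
  have hΓ : 0 < Gamma k := Gamma_pos_of_pos hk
  have hpt : ∀ y ∈ Ioi (0 : ℝ), ENNReal.ofReal (exp (l * y)) * gammaDensityRatio k ρ y ^ α *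
        ENNReal.ofReal (exp (-y))
      = ENNReal.ofReal (ρ ^ (α * k) / Gamma k ^ α *
          (y ^ (1 + α * (k - 1) - 1) * exp (-(s * y)))) := by
    intro y (hy : 0 < y)
    rw [gammaDensityRatio, ENNReal.ofReal_rpow_of_pos (by positivity),
      ← ENNReal.ofReal_mul (by positivity), ← ENNReal.ofReal_mul (by positivity)]
    congr 1
    rw [mul_rpow (by positivity) (exp_nonneg _), mul_rpow (by positivity) (by positivity),
      div_rpow (by positivity) hΓ.le, ← rpow_mul hρ.le, ← rpow_mul hy.le, ← exp_mul,
      add_sub_cancel_left, mul_comm k α, mul_comm (k - 1) α]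
    have he : exp (l * y) * exp (-(ρ - 1) * y * α) * exp (-y) = exp (-(s * y)) := by
      rw [← exp_add, ← exp_add]; congr 1; simp only [s]; ring
    rw [← he]; ring
  simp_rw [setLIntegral_congr_fun measurableSet_Ioi hpt,
    ENNReal.ofReal_mul (by positivity : 0 ≤ ρ ^ (α * k) / Gamma k ^ α)]
  rw [lintegral_const_mul' _ _ ENNReal.ofReal_ne_top, lintegral_rpow_mul_exp_neg_mul_Ioi hm hs,
    ← ENNReal.ofReal_mul (by positivity), one_div, inv_rpow hs.le]
  congr 1
  ring

theorem betaFn_gammaDensityRatio {k ρ α l : ℝ} (hk : 0 < k) (hρ : 0 < ρ)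
    (hm : 0 < 1 + α * (k - 1)) (hl : l < 1 + α * (ρ - 1)) :
    betaFn (gammaDensityRatio k ρ) (l, α)
      = ((log (Gamma (1 + α * (k - 1)) / Gamma k ^ α * ρ ^ (α * k)
          / (1 + α * (ρ - 1) - l) ^ (1 + α * (k - 1))) : ℝ) : EReal) := by
  have hΓm := Gamma_pos_of_pos hm
  have hΓk := Gamma_pos_of_pos hk
  have hs : 0 < 1 + α * (ρ - 1) - l := sub_pos.2 hl
  exact (congrArg ENNReal.log (lintegral_exp_mul_gammaDensityRatio_rpow hk hρ hm hl)).trans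
    (ENNReal.log_ofReal_of_pos (by positivity))

theorem one_add_mul_rpow_le_Gamma_div_mul_rpow {k ρ α : ℝ} (hk : 0 < k) (hρ : 0 < ρ)
    (hα : 1 ≤ α) (hm : 0 < 1 + α * (k - 1)) (hs : 0 < 1 + α * (ρ - 1)) :
    (1 + α * (ρ - 1)) ^ (1 + α * (k - 1))
      ≤ Gamma (1 + α * (k - 1)) / Gamma k ^ α * ρ ^ (α * k) := by
  have hmoment := lintegral_exp_mul_gammaDensityRatio_rpow hk hρ hm (l := 0) (by linarith)
  have hmass := lintegral_exp_mul_gammaDensityRatio_rpow hk hρ (α := 1) (l := 0) (by linarith)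
    (by linarith)
  simp only [zero_mul, exp_zero, ENNReal.ofReal_one, one_mul, sub_zero, ENNReal.rpow_one,
    rpow_one, add_sub_cancel] at hmoment hmass
  have hΓ : Gamma k ≠ 0 := (Gamma_pos_of_pos hk).ne'
  rw [show Gamma k / Gamma k * ρ ^ k / ρ ^ k = 1 by field_simp, ENNReal.ofReal_one] at hmass
  have hexp : ∫⁻ y in Ioi 0, ENNReal.ofReal (exp (-y)) = 1 := by
    simpa using lintegral_rpow_mul_exp_neg_mul_Ioi one_pos one_pos
  have hjensen := lintegral_mul_rpow_le_of_lintegral_eq_one (f := gammaDensityRatio k ρ)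
    (by fun_prop) (by unfold gammaDensityRatio; fun_prop) hexp hα
  rw [hmass, ENNReal.one_rpow, hmoment, ENNReal.one_le_ofReal] at hjensen
  rwa [one_le_div (by positivity)] at hjensen

/-- For the Gamma(`k,ρ`) density `g(x) = ρ^k/Γ(k)·x^{k−1}e^{−ρx}` with `k ≥ 1`,
`ρ > 1` (so `eH x = e^{H(x)} = g(x)e^x`), one has for every `α > 1`:
`sup_{θ > 0} G_α^{(2)}(θ) ≤ (Γ(1+α(k−1))/Γ(k)^α · ρ^{αk})^{1/(1+α(k−1))} − α(ρ−1) − 1`. -/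
theorem iSup_G2_gamma_le (k ρ α : ℝ) (hk : 1 ≤ k) (hρ : 1 < ρ) (hα : 1 < α) :
    (⨆ θ ∈ Set.Ioi (0 : ℝ),
        G2 (fun x => ENNReal.ofReal
          (ρ ^ k / Real.Gamma k * x ^ (k - 1) * Real.exp (-(ρ - 1) * x))) α θ)
      ≤ (((Real.Gamma (1 + α * (k - 1)) / Real.Gamma k ^ α * ρ ^ (α * k))
            ^ (1 / (1 + α * (k - 1))) - α * (ρ - 1) - 1 : ℝ) : EReal) := by
  change (⨆ θ ∈ Ioi (0 : ℝ), G2 (gammaDensityRatio k ρ) α θ) ≤ _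
  set m := 1 + α * (k - 1)
  set s₀ := 1 + α * (ρ - 1)
  set C := Gamma m / Gamma k ^ α * ρ ^ (α * k)
  set c := C ^ (1 / m)
  have hm : 0 < m := by nlinarith
  have hs₀ : 0 < s₀ := by nlinarith
  have hC : 0 < C := by
    have := Gamma_pos_of_pos hm
    have := Gamma_pos_of_pos (by linarith : 0 < k)
    positivity
  have hCc : C = c ^ m := by rw [← rpow_mul hC.le, one_div_mul_cancel hm.ne', rpow_one]
  have hs₀c : s₀ ≤ c := by
    rw [← rpow_le_rpow_iff hs₀.le (rpow_nonneg hC.le _) hm, ← hCc]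
    exact one_add_mul_rpow_le_Gamma_div_mul_rpow (by linarith) (by linarith) hα.le hm hs₀
  have hβ : ∀ s, s₀ ≤ s →
      betaFn (gammaDensityRatio k ρ) (s₀ - s, α) = ((m * log (c / s) : ℝ) : EReal) := by
    intro s hs
    rw [betaFn_gammaDensityRatio (by linarith) (by linarith) hm (by linarith), sub_sub_cancel]
    change ((log (C / s ^ m) : ℝ) : EReal) = _
    have hc : 0 < c := hs₀.trans_le hs₀c
    rw [hCc, ← div_rpow hc.le (by linarith), log_rpow (div_pos hc (hs₀.trans_le hs))]
  refine iSup₂_le fun θ (hθ : 0 < θ) => ?_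
  -- `s ↦ θ m log (c / s) + s` is minimised at `s = θ m`, but the slope `s₀ - s` must be `≤ 0`.
  set s := max (θ * m) s₀
  have hs : s₀ ≤ s := le_max_right _ _
  calc G2 (gammaDensityRatio k ρ) α θ ≤ ((θ * (m * log (c / s)) - (s₀ - s) : ℝ) : EReal) :=
        G2_le_of_betaFn_eq hθ (by linarith) (hβ s hs)
    _ ≤ ((c - α * (ρ - 1) - 1 : ℝ) : EReal) := EReal.coe_le_coe_iff.2 <| by
        linarith [mul_log_div_max_add_max_le (u := θ * m) hs₀ hs₀c]
end

section
/- Let σ > 1 and C > 0, and let g be a probability density on [0,∞) satisfying g(x) ≤ C e^{−σx} for all x ≥ 0. Let H(x) = x + log g(x) (with H(x) = −∞ where g(x) = 0), and define β(λ₁,λ₂) = log ∫₀^∞ e^{λ₁ y + λ₂ H(y)} e^{−y} dy, β*(x₁,x₂) = sup_{(λ₁,λ₂) ∈ ℝ²} [λ₁x₁ + λ₂x₂ − β(λ₁,λ₂)], and G_α^{(2)}(θ) = θ · sup{ α x₂ − β*(x₁,x₂) : (x₁,x₂) ∈ ℝ², x₁ ≤ 1/θ } for θ > 0. Then for every α >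 1, sup_{θ ∈ (0,∞)} G_α^{(2)}(θ) ≤ C^α − 1 − α(σ−1). -/
open MeasureTheory

open Real Set

lemma setIntegral_Ioi_le_of_le_mul_exp {f : ℝ → ℝ} {C σ : ℝ} (hσ : 0 < σ)
    (hf : IntegrableOn f (Ioi 0)) (hbd : ∀ x, 0 < x → f x ≤ C * exp (-σ * x)) :
    ∫ x in Ioi 0, f x ≤ C / σ := by
  have hexp : IntegrableOn (fun x => C * exp (-σ * x)) (Ioi 0) :=
    (integrableOn_exp_mul_Ioi (neg_neg_of_pos hσ) 0).const_mul C
  calc ∫ x in Ioi 0, f x ≤ ∫ x in Ioi 0, C * exp (-σ * x) :=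
        setIntegral_mono_on hf hexp measurableSet_Ioi hbd
    _ = C / σ := by
        rw [integral_const_mul, integral_exp_mul_Ioi (neg_neg_of_pos hσ)]
        field_simp
        simp

lemma lintegral_Ioi_ofReal_exp_neg_mul {k : ℝ} (hk : 0 < k) :
    ∫⁻ y in Ioi 0, ENNReal.ofReal (exp (-k * y)) = ENNReal.ofReal k⁻¹ := by
  rw [← ofReal_integral_eq_lintegral_ofReal (integrableOn_exp_mul_Ioi (neg_neg_of_pos hk) 0)
    (ae_of_all _ fun y => (exp_pos _).le), integral_exp_mul_Ioi (neg_neg_of_pos hk)]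
  simp [neg_div]

lemma betaFn_le_log_of_le_mul_exp {eH : ℝ → ENNReal} {C c l₁ l₂ : ℝ} (hC : 0 < C)
    (hl₂ : 0 ≤ l₂) (hk : 0 < 1 - l₁ - l₂ * c)
    (hbd : ∀ y, 0 < y → eH y ≤ ENNReal.ofReal (C * exp (c * y))) :
    betaFn eH (l₁, l₂) ≤ ((log (C ^ l₂ / (1 - l₁ - l₂ * c)) : ℝ) : EReal) := by
  set k := 1 - l₁ - l₂ * c
  have hpt : ∀ y ∈ Ioi (0 : ℝ),
      ENNReal.ofReal (exp (l₁ * y)) * eH y ^ l₂ * ENNReal.ofReal (exp (-y))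
        ≤ ENNReal.ofReal (C ^ l₂) * ENNReal.ofReal (exp (-k * y)) := by
    intro y hy
    calc ENNReal.ofReal (exp (l₁ * y)) * eH y ^ l₂ * ENNReal.ofReal (exp (-y))
        ≤ ENNReal.ofReal (exp (l₁ * y)) * ENNReal.ofReal (C * exp (c * y)) ^ l₂
            * ENNReal.ofReal (exp (-y)) := by
          gcongr
          exact hbd y hy
      _ = ENNReal.ofReal (C ^ l₂) * ENNReal.ofReal (exp (-k * y)) := by
          rw [ENNReal.ofReal_rpow_of_nonneg (by positivity) hl₂, mul_rpow hC.le (exp_pos _).le,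
            ← exp_mul, ← ENNReal.ofReal_mul (exp_pos _).le, ← ENNReal.ofReal_mul (by positivity),
            ← ENNReal.ofReal_mul (by positivity)]
          congr 1
          rw [mul_left_comm, mul_assoc, ← exp_add, ← exp_add]
          simp only [k]
          ring_nf
  have hlint := (setLIntegral_mono' measurableSet_Ioi hpt).trans_eq
    (by rw [lintegral_const_mul _ (by fun_prop), lintegral_Ioi_ofReal_exp_neg_mul hk,
      ← ENNReal.ofReal_mul (by positivity)])
  exact (ENNReal.log_monotone hlint).trans_eq (ENNReal.log_ofReal_of_pos (by positivity))

lemma betaStar_ge_of_betaFn_le {eH : ℝ → ENNReal} {l x : ℝ × ℝ} {B : ℝ}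
    (hB : betaFn eH l ≤ B) :
    ((l.1 * x.1 + l.2 * x.2 - B : ℝ) : EReal) ≤ betaStar eH x :=
  calc ((l.1 * x.1 + l.2 * x.2 - B : ℝ) : EReal)
      ≤ ((l.1 * x.1 + l.2 * x.2 : ℝ) : EReal) - betaFn eH l := by
        rw [EReal.coe_sub]
        exact EReal.sub_le_sub le_rfl hB
    _ ≤ betaStar eH x :=
        le_iSup (fun l : ℝ × ℝ => ((l.1 * x.1 + l.2 * x.2 : ℝ) : EReal) - betaFn eH l) l

lemma G2_le_of_betaFn_le {eH : ℝ → ENNReal} {α θ t B : ℝ} (hθ : 0 < θ) (ht : 0 ≤ t)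
    (hB : betaFn eH (-t, α) ≤ B) : G2 eH α θ ≤ ((t + θ * B : ℝ) : EReal) := by
  have hsup : (⨆ x : {p : ℝ × ℝ // p.1 ≤ θ⁻¹},
      ((α * (x : ℝ × ℝ).2 : ℝ) : EReal) - betaStar eH x) ≤ ((t * θ⁻¹ + B : ℝ) : EReal) := by
    refine iSup_le fun ⟨⟨x₁, x₂⟩, hx⟩ => ?_
    calc ((α * x₂ : ℝ) : EReal) - betaStar eH (x₁, x₂)
        ≤ ((α * x₂ : ℝ) : EReal) - ((-t * x₁ + α * x₂ - B : ℝ) : EReal) :=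
          EReal.sub_le_sub le_rfl (betaStar_ge_of_betaFn_le (x := (x₁, x₂)) hB)
      _ ≤ ((t * θ⁻¹ + B : ℝ) : EReal) := by
          rw [← EReal.coe_sub, EReal.coe_le_coe_iff]
          nlinarith [mul_le_mul_of_nonneg_left hx ht]
  calc G2 eH α θ ≤ ((θ : ℝ) : EReal) * ((t * θ⁻¹ + B : ℝ) : EReal) :=
        mul_le_mul_of_nonneg_left hsup (EReal.coe_nonneg.2 hθ.le)
    _ = ((t + θ * B : ℝ) : EReal) := by
        rw [← EReal.coe_mul]
        congr 1
        field_simp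

lemma max_sub_add_mul_log_div_max_le {a θ K : ℝ} (ha : 0 < a) (hθ : 0 < θ) (haK : a ≤ K) :
    max a θ - a + θ * log (K / max a θ) ≤ K - a := by
  set s := max a θ
  have hs : 0 < s := lt_max_of_lt_left ha
  have hlog : θ * log (K / s) ≤ θ * (K / s - 1) :=
    mul_le_mul_of_nonneg_left (log_le_sub_one_of_pos (div_pos (ha.trans_le haK) hs)) hθ.le
  -- the slack is `(s - θ) (s - K) / s`, and `s - θ > 0` only when `s = a ≤ K`
  have hsign : (s - θ) * (s - K) ≤ 0 := by
    rcases max_cases a θ with ⟨hsa, _⟩ | ⟨hsθ, _⟩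
    · exact mul_nonpos_of_nonneg_of_nonpos (by linarith [le_max_right a θ]) (by linarith)
    · simp [s, hsθ]
  have hkey : θ * (K / s - 1) = K - s + (s - θ) * (s - K) / s := by
    field_simp
    ring
  have : (s - θ) * (s - K) / s ≤ 0 := div_nonpos_of_nonpos_of_nonneg hsign hs.le
  linarith

theorem iSup_G2_subexponential_le_general (σ C : ℝ) (hσ : 1 < σ)
    (g : ℝ → ℝ)
    (hgint : ∫ x in Set.Ioi (0 : ℝ), g x = 1)
    (hgbd : ∀ x, 0 ≤ x → g x ≤ C * Real.exp (-σ * x))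
    (α : ℝ) (hα : 1 < α) :
    (⨆ θ ∈ Set.Ioi (0 : ℝ),
        G2 (fun x => ENNReal.ofReal (g x * Real.exp x)) α θ)
      ≤ ((C ^ α - 1 - α * (σ - 1) : ℝ) : EReal) := by
  have hσC : σ ≤ C := by
    have h := setIntegral_Ioi_le_of_le_mul_exp (by linarith)
      (Integrable.of_integral_ne_zero (by simp [hgint])) fun x hx => hgbd x hx.le
    rw [hgint, le_div_iff₀ (by linarith)] at h
    linarith
  set a := 1 + α * (σ - 1)
  have haC : a ≤ C ^ α := by
    have bernoulli := one_add_mul_self_le_rpow_one_add (s := σ - 1) (by linarith) hα.le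
    rw [add_sub_cancel] at bernoulli
    exact bernoulli.trans (rpow_le_rpow (by linarith) hσC (by linarith))
  have heH : ∀ y, 0 < y →
      ENNReal.ofReal (g y * exp y) ≤ ENNReal.ofReal (C * exp ((1 - σ) * y)) := by
    intro y hy
    apply ENNReal.ofReal_le_ofReal
    calc g y * exp y ≤ C * exp (-σ * y) * exp y := by gcongr; exact hgbd y hy.le
      _ = C * exp ((1 - σ) * y) := by rw [mul_assoc, ← exp_add]; ring_nf
  refine iSup₂_le fun θ hθ => ?_
  have hk : 1 - -(max a θ - a) - α * (1 - σ) = max a θ := by ring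
  have hβ := betaFn_le_log_of_le_mul_exp (l₁ := -(max a θ - a)) (by linarith) (by linarith)
    (hk ▸ lt_max_of_lt_left (by nlinarith)) heH
  rw [hk] at hβ
  refine (G2_le_of_betaFn_le hθ (sub_nonneg.2 (le_max_left a θ)) hβ).trans ?_
  exact_mod_cast max_sub_add_mul_log_div_max_le (by nlinarith) hθ haC |>.trans_eq (by ring)

/-- If `g` is a probability density on `[0,∞)` with `g(x) ≤ Ce^{−σx}`, `σ > 1`,
`C > 0` (so `eH x = e^{H(x)} = g(x)e^x`), then for every `α > 1`:
`sup_{θ > 0} G_α^{(2)}(θ) ≤ C^α − 1 − α(σ−1)`. -/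
theorem iSup_G2_subexponential_le (σ C : ℝ) (hσ : 1 < σ) (hC : 0 < C)
    (g : ℝ → ℝ) (hg : Measurable g) (hg0 : ∀ x, 0 ≤ g x)
    (hgint : ∫ x in Set.Ioi (0 : ℝ), g x = 1)
    (hgbd : ∀ x, 0 ≤ x → g x ≤ C * Real.exp (-σ * x))
    (α : ℝ) (hα : 1 < α) :
    (⨆ θ ∈ Set.Ioi (0 : ℝ),
        G2 (fun x => ENNReal.ofReal (g x * Real.exp x)) α θ)
      ≤ ((C ^ α - 1 - α * (σ - 1) : ℝ) : EReal) :=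
  iSup_G2_subexponential_le_general σ C hσ g hgint hgbd α hα
end
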